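/- arXiv:2506.04884 — 5 statements merged into one kernel-verified Lean document; each statement's English description precedes it below -/
import Mathlib

section
/- In the extremal setup (r ≥ 1, n ≥ 8(r²+r+4), G* extremal, A = N(u*)), every vertex u ∈ A satisfies d_A(u) ≤ r, and moreover e(A) ≤ ν(G*[A]) · (r+1), where e(A) is the number of edges of G* with both endpoints in A and ν(G*[A]) is the matching number of the subgraph of G* induced by A. -/
open Finset Matrix

noncomputable section

/-- The book graph `B_{r+1}`: `r+1` triangles sharing a common edge, i.e. the join of an
edge (vertices `0, 1`) with an independent set of `r+1` vertices. -/
def bookGraph (r : ℕ) : SimpleGraph (Fin (r + 3)) :=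
  SimpleGraph.fromRel (fun u _ => u.val < 2)

/-- `Free H G` means `G` contains no subgraph isomorphic to `H`, i.e. there is no injective
graph homomorphism from `H` to `G`. -/
def Free {W V : Type*} (H : SimpleGraph W) (G : SimpleGraph V) : Prop :=
  ¬ ∃ f : H →g G, Function.Injective f

/-- The adjacency matrix of `G` over `ℝ` (with classical decidability of adjacency). -/
def adjMat {V : Type*} (G : SimpleGraph V) : Matrix V V ℝ :=
  letI : DecidableRel G.Adj := Classical.decRel _
  G.adjMatrix ℝ

/-- The spectral radius of a finite simple graph: the largest real eigenvalue of its
adjacency matrix. -/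
def specRad {V : Type*} [Fintype V] (G : SimpleGraph V) : ℝ :=
  sSup {t : ℝ | ∃ v : V → ℝ, v ≠ 0 ∧ adjMat G *ᵥ v = t • v}

/-- `Kstrr s t r` is the graph `K_{s,t}^{r,r}`: the complete bipartite graph with parts
`Fin s` and `Fin t`, together with one extra vertex (`none`) joined to exactly the first
`r` vertices of each part. -/
def Kstrr (s t r : ℕ) : SimpleGraph (Option (Fin s ⊕ Fin t)) :=
  SimpleGraph.fromRel (fun u v =>
    (∃ a b, u = some (Sum.inl a) ∧ v = some (Sum.inr b)) ∨
    (∃ a : Fin s, u = none ∧ v = some (Sum.inl a) ∧ a.val < r) ∨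
    (∃ b : Fin t, u = none ∧ v = some (Sum.inr b) ∧ b.val < r))

/-- `degIn G S v` is the number of neighbours of `v` in the set `S`. -/
def degIn {V : Type*} (G : SimpleGraph V) (S : Finset V) (v : V) : ℕ :=
  letI : DecidableRel G.Adj := Classical.decRel _
  (S.filter fun w => G.Adj v w).card

/-- `edgesIn G S` is the number of edges of `G` with both endpoints in `S`. -/
def edgesIn {V : Type*} [Fintype V] (G : SimpleGraph V) (S : Finset V) : ℕ :=
  letI := Classical.decEq V
  letI : DecidableRel G.Adj := Classical.decRel _
  letI : DecidablePred fun e : Sym2 V => ∀ v ∈ e, v ∈ S := Classical.decPred _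
  (G.edgeFinset.filter fun e => ∀ v ∈ e, v ∈ S).card

/-- `edgeCount G` is the number of edges of `G`. -/
def edgeCount {V : Type*} [Fintype V] (G : SimpleGraph V) : ℕ :=
  letI := Classical.decEq V
  letI : DecidableRel G.Adj := Classical.decRel _
  G.edgeFinset.card

/-- `edgesBetween G S T` is the number of pairs `(s, t) ∈ S × T` with `s` adjacent to `t`;
for disjoint `S` and `T` this is the number of edges between `S` and `T`. -/
def edgesBetween {V : Type*} (G : SimpleGraph V) (S T : Finset V) : ℕ :=
  letI : DecidableRel G.Adj := Classical.decRel _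
  ((S ×ˢ T).filter fun p => G.Adj p.1 p.2).card

/-- `maxDeg G` is the maximum degree of `G`. -/
def maxDeg {V : Type*} [Fintype V] (G : SimpleGraph V) : ℕ :=
  letI : DecidableRel G.Adj := Classical.decRel _
  G.maxDegree

/-- `matchingNumberOn G S` is the matching number of the subgraph of `G` induced by `S`:
the largest cardinality of a set of pairwise disjoint edges of `G` lying inside `S`. -/
def matchingNumberOn {V : Type*} (G : SimpleGraph V) (S : Finset V) : ℕ :=
  sSup {k | ∃ M : Finset (Sym2 V), ↑M ⊆ G.edgeSet ∧ (∀ e ∈ M, ∀ v ∈ e, v ∈ S) ∧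
    M.card = k ∧ (M : Set (Sym2 V)).Pairwise fun e f => ∀ v, v ∈ e → v ∉ f}

/-- `matchingNumber G` is the matching number of `G`. -/
def matchingNumber {V : Type*} [Fintype V] (G : SimpleGraph V) : ℕ :=
  matchingNumberOn G Finset.univ

end


set_option linter.unusedSectionVars false
set_option maxHeartbeats 1000000

namespace Bk

variable {V : Type*} [Fintype V] [DecidableEq V]

def supp (f : V → V) : Finset V := Finset.univ.filter (fun v => f v ≠ v)

lemma mem_supp {f : V → V} {v : V} : v ∈ supp f ↔ f v ≠ v := by simp [supp]

def IsMch (G : SimpleGraph V) (S : Finset V) (f : V → V) : Prop :=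
  Function.Involutive f ∧ ∀ v, f v ≠ v → G.Adj v (f v) ∧ v ∈ S

lemma IsMch.mem_right {G : SimpleGraph V} {S : Finset V} {f : V → V}
    (h : IsMch G S f) {v : V} (hv : f v ≠ v) : f v ∈ S := by
  have h2 : f (f v) ≠ f v := by rw [h.1 v]; exact fun hc => hv hc.symm
  exact (h.2 (f v) h2).2

noncomputable def nu2 (G : SimpleGraph V) (S : Finset V) : ℕ :=
  sSup {k | ∃ f, IsMch G S f ∧ (supp f).card = k}


section A1
lemma IsMch.mono {G : SimpleGraph V} {S T : Finset V} {f : V → V}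
    (h : IsMch G S f) (hST : S ⊆ T) : IsMch G T f :=
  ⟨h.1, fun v hv => ⟨(h.2 v hv).1, hST (h.2 v hv).2⟩⟩

lemma isMch_id (G : SimpleGraph V) (S : Finset V) : IsMch G S id :=
  ⟨fun _ => rfl, fun v hv => absurd rfl hv⟩

/-- twice the matching number of `G` on `S` -/
lemma nu2_set_nonempty (G : SimpleGraph V) (S : Finset V) :
    {k | ∃ f, IsMch G S f ∧ (supp f).card = k}.Nonempty := by
  refine ⟨(supp (id : V → V)).card, id, isMch_id G S, rfl⟩

lemma nu2_set_bdd (G : SimpleGraph V) (S : Finset V) :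
    BddAbove {k | ∃ f, IsMch G S f ∧ (supp f).card = k} := by
  refine ⟨Fintype.card V, fun k hk => ?_⟩
  obtain ⟨f, _, rfl⟩ := hk
  exact le_trans (Finset.card_le_card (Finset.filter_subset _ _)) (by simp)

lemma le_nu2 {G : SimpleGraph V} {S : Finset V} {f : V → V} (h : IsMch G S f) :
    (supp f).card ≤ nu2 G S :=
  le_csSup (nu2_set_bdd G S) ⟨f, h, rfl⟩

lemma nu2_spec (G : SimpleGraph V) (S : Finset V) :
    ∃ f, IsMch G S f ∧ (supp f).card = nu2 G S := by
  have := Nat.sSup_mem (nu2_set_nonempty G S) (nu2_set_bdd G S)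
  exact this

lemma nu2_mono {G : SimpleGraph V} {S T : Finset V} (h : S ⊆ T) : nu2 G S ≤ nu2 G T := by
  refine csSup_le (nu2_set_nonempty G S) (fun k hk => ?_)
  obtain ⟨f, hf, rfl⟩ := hk
  exact le_nu2 (hf.mono h)

/-- the edges of a matching, as a finset of `Sym2 V` -/
def medges (f : V → V) : Finset (Sym2 V) := (supp f).image (fun v => s(v, f v))

lemma card_supp_eq_two_mul {G : SimpleGraph V} {S : Finset V} {f : V → V} (h : IsMch G S f) :
    (supp f).card = 2 * (medges f).card := by
  rw [Finset.card_eq_sum_card_image (fun v => s(v, f v)) (supp f)]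
  rw [Finset.sum_congr rfl (g := fun _ => 2), Finset.sum_const, smul_eq_mul, mul_comm, medges]
  intro e he
  obtain ⟨a, ha, rfl⟩ := Finset.mem_image.mp he
  have hfa : f a ≠ a := mem_supp.mp ha
  have hsub : (supp f).filter (fun v => s(v, f v) = s(a, f a)) = {a, f a} := by
    ext v
    simp only [Finset.mem_filter, mem_supp, Finset.mem_insert, Finset.mem_singleton]
    constructor
    · rintro ⟨hv, he⟩
      rw [Sym2.eq_iff] at he
      rcases he with ⟨h1, _⟩ | ⟨h1, h2⟩
      · exact Or.inl h1
      · exact Or.inr h1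
    · rintro (rfl | rfl)
      · exact ⟨hfa, rfl⟩
      · refine ⟨by rw [h.1 a]; exact fun hc => hfa hc.symm, ?_⟩
        rw [h.1 a]; exact Sym2.eq_swap
  rw [hsub, Finset.card_insert_of_notMem (by simp [Ne.symm hfa]), Finset.card_singleton]

lemma even_nu2 (G : SimpleGraph V) (S : Finset V) : Even (nu2 G S) := by
  obtain ⟨f, hf, hc⟩ := nu2_spec G S
  exact hc ▸ (card_supp_eq_two_mul hf ▸ even_two_mul _)


end A1

section A2


variable {V : Type*} [Fintype V] [DecidableEq V] (G : SimpleGraph V) [DecidableRel G.Adj]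

lemma degIn_eq (S : Finset V) (v : V) :
    degIn G S v = (S.filter fun w => G.Adj v w).card := by
  unfold degIn
  congr!

lemma edgesIn_eq (S : Finset V) :
    edgesIn G S = (G.edgeFinset.filter fun e => ∀ v ∈ e, v ∈ S).card := by
  unfold edgesIn
  congr!

lemma degIn_mono {S T : Finset V} (h : S ⊆ T) (v : V) : degIn G S v ≤ degIn G T v := by
  rw [degIn_eq, degIn_eq]
  exact Finset.card_le_card (Finset.filter_subset_filter _ h)

lemma degIn_le_card_sub_one (S : Finset V) (v : V) : degIn G S v ≤ (S.erase v).card := by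
  rw [degIn_eq]
  refine Finset.card_le_card (fun w hw => ?_)
  rw [Finset.mem_filter] at hw
  exact Finset.mem_erase.mpr ⟨fun h => G.loopless.irrefl v (h ▸ hw.2), hw.1⟩

lemma degIn_erase (S : Finset V) (v : V) : degIn G (S.erase v) v = degIn G S v := by
  rw [degIn_eq, degIn_eq]
  congr 1
  rw [Finset.filter_erase]
  refine Finset.erase_eq_of_notMem ?_
  simp [G.loopless.irrefl v]

lemma edgesIn_empty : edgesIn G (∅ : Finset V) = 0 := by
  rw [edgesIn_eq]
  rw [Finset.card_eq_zero, Finset.filter_eq_empty_iff]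
  intro e he
  induction e with
  | _ a b =>
    intro h
    exact absurd (h a (Sym2.mem_mk_left a b)) (Finset.notMem_empty a)

lemma edgesIn_insert {S : Finset V} {v : V} (hv : v ∉ S) :
    edgesIn G (insert v S) = edgesIn G S + degIn G S v := by
  classical
  rw [edgesIn_eq, edgesIn_eq, degIn_eq]
  set E := G.edgeFinset.filter (fun e => ∀ x ∈ e, x ∈ insert v S) with hE
  have hsplit : (E.filter (fun e => v ∈ e)).card + (E.filter (fun e => ¬ v ∈ e)).card = E.card :=
    Finset.card_filter_add_card_filter_not _
  have h1 : E.filter (fun e => ¬ v ∈ e) = G.edgeFinset.filter (fun e => ∀ x ∈ e, x ∈ S) := by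
    ext e
    simp only [hE, Finset.mem_filter, and_assoc]
    constructor
    · rintro ⟨he, hall, hne⟩
      refine ⟨he, fun x hx => ?_⟩
      rcases Finset.mem_insert.mp (hall x hx) with rfl | h
      · exact absurd hx hne
      · exact h
    · rintro ⟨he, hall⟩
      exact ⟨he, fun x hx => Finset.mem_insert_of_mem (hall x hx),
        fun hc => hv (hall v hc)⟩
  have h2 : (E.filter (fun e => v ∈ e)).card = (S.filter fun w => G.Adj v w).card := by
    symm
    refine Finset.card_bij (fun w _ => s(v, w)) ?_ ?_ ?_
    · intro w hw
      rw [Finset.mem_filter] at hw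
      simp only [hE, Finset.mem_filter]
      refine ⟨⟨SimpleGraph.mem_edgeFinset.mpr hw.2, ?_⟩, Sym2.mem_mk_left _ _⟩
      intro x hx
      rcases Sym2.mem_iff.mp hx with rfl | rfl
      · exact Finset.mem_insert_self _ _
      · exact Finset.mem_insert_of_mem hw.1
    · intro a ha b hb hab
      rw [Sym2.eq_iff] at hab
      rcases hab with ⟨_, h⟩ | ⟨h1, h2⟩
      · exact h
      · rw [← h1, h2]
    · intro e he
      simp only [hE, Finset.mem_filter] at he
      obtain ⟨⟨he1, he2⟩, hev⟩ := he
      obtain ⟨w, rfl⟩ := Sym2.mem_iff_exists.mp hev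
      have hadj : G.Adj v w := SimpleGraph.mem_edgeFinset.mp he1
      have hwS : w ∈ S := by
        rcases Finset.mem_insert.mp (he2 w (Sym2.mem_mk_right _ _)) with rfl | h
        · exact absurd hadj (G.loopless.irrefl w)
        · exact h
      exact ⟨w, Finset.mem_filter.mpr ⟨hwS, hadj⟩, rfl⟩
  have h1' : (E.filter (fun e => ¬ v ∈ e)).card
      = (G.edgeFinset.filter (fun e => ∀ x ∈ e, x ∈ S)).card := by rw [h1]
  rw [← hsplit, h2, h1']
  omega

lemma degIn_insert {S : Finset V} {v : V} (hv : v ∉ S) (w : V) :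
    degIn G (insert v S) w = degIn G S w + (if G.Adj w v then 1 else 0) := by
  rw [degIn_eq, degIn_eq, Finset.filter_insert]
  split
  · rw [Finset.card_insert_of_notMem (fun hc => hv (Finset.mem_of_mem_filter _ hc))]
  · simp

lemma handshake (S : Finset V) : 2 * edgesIn G S = ∑ v ∈ S, degIn G S v := by
  classical
  induction S using Finset.induction_on with
  | empty => simp [edgesIn_empty]
  | @insert v S hv ih =>
    rw [edgesIn_insert G hv, Finset.sum_insert hv]
    have h1 : degIn G (insert v S) v = degIn G S v := by
      rw [degIn_insert G hv v]; simp [G.loopless.irrefl v]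
    have h2 : ∑ w ∈ S, degIn G (insert v S) w
        = (∑ w ∈ S, degIn G S w) + degIn G S v := by
      rw [Finset.sum_congr rfl (fun w _ => degIn_insert G hv w), Finset.sum_add_distrib]
      congr 1
      rw [← Finset.card_filter, degIn_eq]
      congr 1
      refine Finset.filter_congr (fun x _ => ?_)
      simp [G.adj_comm]
    rw [h1, h2]
    omega


end A2

section A3


variable {V : Type*} [Fintype V] [DecidableEq V]

/-- the graph `G` restricted to vertex set `S` (as a graph on `V`) -/
def gOn (G : SimpleGraph V) (S : Finset V) : SimpleGraph V where
  Adj a b := G.Adj a b ∧ a ∈ S ∧ b ∈ S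
  symm := ⟨by rintro a b ⟨h, ha, hb⟩; exact ⟨h.symm, hb, ha⟩⟩
  loopless := ⟨fun a h => G.loopless.irrefl a h.1⟩

variable (G : SimpleGraph V)

/-- components of `gOn G S` represented in `S` -/
noncomputable def comps (S : Finset V) : Finset (SimpleGraph.ConnectedComponent (gOn G S)) :=
  letI := Classical.dec
  S.image (fun v => (gOn G S).connectedComponentMk v)

/-- the part of `S` lying in component `c` -/
noncomputable def cpart (S : Finset V) (c : SimpleGraph.ConnectedComponent (gOn G S)) :
    Finset V :=
  letI := Classical.dec
  S.filter (fun v => (gOn G S).connectedComponentMk v = c)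

lemma mem_cpart {S : Finset V} {c} {v : V} :
    v ∈ cpart G S c ↔ v ∈ S ∧ (gOn G S).connectedComponentMk v = c := by
  classical
  simp [cpart]

lemma cpart_subset {S : Finset V} {c} : cpart G S c ⊆ S := fun v hv => ((mem_cpart G).mp hv).1

lemma adj_mem_cpart {S : Finset V} {c} {a b : V} (ha : a ∈ cpart G S c)
    (hab : G.Adj a b) (hbS : b ∈ S) : b ∈ cpart G S c := by
  rw [mem_cpart] at ha ⊢
  have hadj : (gOn G S).Adj a b := ⟨hab, ha.1, hbS⟩
  exact ⟨hbS, by rw [← SimpleGraph.ConnectedComponent.sound hadj.reachable]; exact ha.2⟩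

lemma edgesIn_comp_sum (S : Finset V) :
    edgesIn G S = ∑ c ∈ comps G S, edgesIn G (cpart G S c) := by
  classical
  have hrw : ∀ T : Finset V,
      edgesIn G T = (G.edgeFinset.filter fun e => ∀ v ∈ e, v ∈ T).card := by
    intro T; unfold edgesIn; congr!
  rw [hrw]
  have hsplit : (G.edgeFinset.filter fun e => ∀ v ∈ e, v ∈ S)
      = (comps G S).biUnion (fun c => G.edgeFinset.filter fun e => ∀ v ∈ e, v ∈ cpart G S c) := by
    ext e
    induction e with
    | _ a b =>
      simp only [Finset.mem_biUnion, Finset.mem_filter]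
      constructor
      · rintro ⟨he, hall⟩
        have haS : a ∈ S := hall a (Sym2.mem_mk_left a b)
        have hbS : b ∈ S := hall b (Sym2.mem_mk_right a b)
        have hadj : G.Adj a b := SimpleGraph.mem_edgeFinset.mp he
        refine ⟨(gOn G S).connectedComponentMk a, ?_, he, ?_⟩
        · unfold comps; rw [Finset.mem_image]; exact ⟨a, haS, rfl⟩
        · intro v hv
          rcases Sym2.mem_iff.mp hv with rfl | rfl
          · exact (mem_cpart G).mpr ⟨haS, rfl⟩
          · exact adj_mem_cpart G ((mem_cpart G).mpr ⟨haS, rfl⟩) hadj hbS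
      · rintro ⟨c, _, he, hall⟩
        exact ⟨he, fun v hv => cpart_subset G (hall v hv)⟩
  rw [hsplit]
  rw [Finset.card_biUnion]
  · exact Finset.sum_congr rfl (fun c _ => (hrw _).symm)
  · intro c hc c' hc' hne
    refine Finset.disjoint_left.mpr (fun e he he' => ?_)
    rw [Finset.mem_filter] at he he'
    induction e with
    | _ a b =>
      have h1 := (mem_cpart G).mp (he.2 a (Sym2.mem_mk_left a b))
      have h2 := (mem_cpart G).mp (he'.2 a (Sym2.mem_mk_left a b))
      exact hne (h1.2 ▸ h2.2 ▸ rfl)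



variable {V : Type*} [Fintype V] [DecidableEq V] (G : SimpleGraph V)

lemma supp_subset_of_isMch {S : Finset V} {f : V → V} (h : IsMch G S f) : supp f ⊆ S :=
  fun v hv => (h.2 v (mem_supp.mp hv)).2

/-- combining matchings on two disjoint sets -/
lemma nu2_combine {X Y : Finset V} (hXY : Disjoint X Y) {Z : Finset V}
    (hX : X ⊆ Z) (hY : Y ⊆ Z) : nu2 G X + nu2 G Y ≤ nu2 G Z := by
  obtain ⟨f1, hf1, hc1⟩ := nu2_spec G X
  obtain ⟨f2, hf2, hc2⟩ := nu2_spec G Y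
  set F : V → V := fun x => if x ∈ X then f1 x else f2 x with hF
  have hmove : ∀ x, F x ≠ x → F x = f1 x ∧ x ∈ X ∧ f1 x ∈ X ∨ F x = f2 x ∧ x ∉ X := by
    intro x hx
    by_cases h : x ∈ X
    · have : F x = f1 x := by rw [hF]; simp [h]
      rw [this] at hx
      exact Or.inl ⟨this, h, hf1.mem_right hx⟩
    · exact Or.inr ⟨by rw [hF]; simp [h], h⟩
  have hFinv : Function.Involutive F := by
    intro x
    by_cases hx : F x = x
    · rw [hx, hx]
    rcases hmove x hx with ⟨he, hxX, hfX⟩ | ⟨he, hxX⟩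
    · rw [he, hF]; simp only [hfX, if_pos]; exact hf1.1 x
    · rw [he, hF]
      have hfx : f2 x ≠ x := fun hc => hx (by rw [he, hc])
      have : f2 x ∉ X := fun hc => Finset.disjoint_left.mp hXY hc (hf2.mem_right hfx)
      simp only [this, if_neg, if_false]
      exact hf2.1 x
  have hFM : IsMch G Z F := by
    refine ⟨hFinv, fun x hx => ?_⟩
    rcases hmove x hx with ⟨he, hxX, _⟩ | ⟨he, hxX⟩
    · rw [he] at hx ⊢
      exact ⟨(hf1.2 x hx).1, hX (hf1.2 x hx).2⟩
    · rw [he] at hx ⊢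
      exact ⟨(hf2.2 x hx).1, hY (hf2.2 x hx).2⟩
  have hsupp : supp F = supp f1 ∪ supp f2 := by
    ext x
    simp only [mem_supp, Finset.mem_union]
    by_cases h : x ∈ X
    · have he : F x = f1 x := by rw [hF]; simp [h]
      rw [he]
      constructor
      · exact Or.inl
      · rintro (h1 | h2)
        · exact h1
        · exact absurd ((hf2.2 x h2).2) (Finset.disjoint_left.mp hXY h)
    · have he : F x = f2 x := by rw [hF]; simp [h]
      rw [he]
      constructor
      · exact Or.inr
      · rintro (h1 | h2)
        · exact absurd ((hf1.2 x h1).2) h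
        · exact h2
  have hdisj : Disjoint (supp f1) (supp f2) :=
    hXY.mono (supp_subset_of_isMch G hf1) (supp_subset_of_isMch G hf2)
  calc nu2 G X + nu2 G Y = (supp F).card := by
        rw [hsupp, Finset.card_union_of_disjoint hdisj, hc1, hc2]
      _ ≤ nu2 G Z := le_nu2 hFM

/-- superadditivity of nu2 over components -/
lemma nu2_comp_sum (S : Finset V) :
    ∑ c ∈ comps G S, nu2 G (cpart G S c) ≤ nu2 G S := by
  classical
  set h : (gOn G S).ConnectedComponent → (V → V) :=
    fun c => Classical.choose (nu2_spec G (cpart G S c)) with hh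
  have hspec : ∀ c, IsMch G (cpart G S c) (h c) ∧ (supp (h c)).card = nu2 G (cpart G S c) :=
    fun c => Classical.choose_spec (nu2_spec G (cpart G S c))
  set F : V → V := fun x => if x ∈ S then h ((gOn G S).connectedComponentMk x) x else x with hF
  have key : ∀ x, x ∈ S → h ((gOn G S).connectedComponentMk x) x ≠ x →
      h ((gOn G S).connectedComponentMk x) x ∈ cpart G S ((gOn G S).connectedComponentMk x) :=
    fun x hx hne => (hspec _).1.mem_right hne
  have hFval : ∀ x ∈ S, F x = h ((gOn G S).connectedComponentMk x) x := by
    intro x hx; rw [hF]; simp [hx]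
  have hFfix : ∀ x, x ∉ S → F x = x := by intro x hx; rw [hF]; simp [hx]
  have hFinv : Function.Involutive F := by
    intro x
    by_cases hx : x ∈ S
    · rw [hFval x hx]
      by_cases hne : h ((gOn G S).connectedComponentMk x) x = x
      · rw [hne, hFval x hx, hne]
      · have hmem := key x hx hne
        rw [mem_cpart] at hmem
        rw [hFval _ hmem.1, hmem.2]
        exact ((hspec _).1).1 x
    · rw [hFfix x hx, hFfix x hx]
  have hFM : IsMch G S F := by
    refine ⟨hFinv, fun x hx => ?_⟩
    by_cases hxS : x ∈ S
    · rw [hFval x hxS] at hx ⊢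
      exact ⟨((hspec _).1.2 x hx).1, hxS⟩
    · exact absurd (hFfix x hxS) hx
  have hsupp : supp F = (comps G S).biUnion (fun c => supp (h c)) := by
    ext x
    simp only [mem_supp, Finset.mem_biUnion]
    constructor
    · intro hx
      have hxS : x ∈ S := by
        by_contra hc; exact hx (hFfix x hc)
      rw [hFval x hxS] at hx
      refine ⟨(gOn G S).connectedComponentMk x, ?_, hx⟩
      unfold comps; rw [Finset.mem_image]; exact ⟨x, hxS, rfl⟩
    · rintro ⟨c, hc, hx⟩
      have hmem : x ∈ cpart G S c := (hspec c).1.2 x hx |>.2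
      rw [mem_cpart] at hmem
      rw [hFval x hmem.1, hmem.2]
      exact hx
  have hdisj : ∀ c ∈ comps G S, ∀ c' ∈ comps G S, c ≠ c' →
      Disjoint (supp (h c)) (supp (h c')) := by
    intro c _ c' _ hne
    refine Finset.disjoint_left.mpr (fun x hx hx' => ?_)
    have h1 := (mem_cpart G).mp (supp_subset_of_isMch G (hspec c).1 hx)
    have h2 := (mem_cpart G).mp (supp_subset_of_isMch G (hspec c').1 hx')
    exact hne (h1.2 ▸ h2.2 ▸ rfl)
  calc ∑ c ∈ comps G S, nu2 G (cpart G S c)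
      = ∑ c ∈ comps G S, (supp (h c)).card := by
        exact Finset.sum_congr rfl (fun c _ => ((hspec c).2).symm)
    _ = (supp F).card := by rw [hsupp, Finset.card_biUnion hdisj]
    _ ≤ nu2 G S := le_nu2 hFM

/-- restricting a maximum matching to a component, keeping a missed vertex missed -/
lemma avoid_transfer {S : Finset V} {c} {v : V} (hv : v ∈ cpart G S c)
    {f : V → V} (hf : IsMch G S f) (hcard : (supp f).card = nu2 G S) (hfv : f v = v) :
    ∃ g, IsMch G (cpart G S c) g ∧ (supp g).card = nu2 G (cpart G S c) ∧ g v = v := by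
  classical
  set C := cpart G S c with hC
  have hclosed : ∀ x, f x ≠ x → (x ∈ C ↔ f x ∈ C) := by
    intro x hx
    have hadj := (hf.2 x hx).1
    have hxS := (hf.2 x hx).2
    have hfxS := hf.mem_right hx
    constructor
    · intro h; exact adj_mem_cpart G h hadj hfxS
    · intro h; exact adj_mem_cpart G h hadj.symm hxS
  set g : V → V := fun x => if x ∈ C then f x else x with hg
  set g' : V → V := fun x => if x ∈ C then x else f x with hg'
  have hgval : ∀ x ∈ C, g x = f x := by intro x hx; rw [hg]; simp [hx]
  have hgfix : ∀ x, x ∉ C → g x = x := by intro x hx; rw [hg]; simp [hx]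
  have hginv : Function.Involutive g := by
    intro x
    by_cases hx : x ∈ C
    · rw [hgval x hx]
      by_cases hne : f x = x
      · rw [hne, hgval x hx, hne]
      · rw [hgval _ ((hclosed x hne).mp hx)]
        exact hf.1 x
    · rw [hgfix x hx, hgfix x hx]
  have hgM : IsMch G C g := by
    refine ⟨hginv, fun x hx => ?_⟩
    by_cases hxC : x ∈ C
    · rw [hgval x hxC] at hx ⊢; exact ⟨(hf.2 x hx).1, hxC⟩
    · exact absurd (hgfix x hxC) hx
  have hg'inv : Function.Involutive g' := by
    intro x
    by_cases hx : x ∈ C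
    · rw [hg']; simp [hx]
    · have : g' x = f x := by rw [hg']; simp [hx]
      rw [this]
      by_cases hne : f x = x
      · rw [hne, this, hne]
      · have : f x ∉ C := fun hc => hx ((hclosed x hne).mpr hc)
        rw [hg']; simp only [this, if_neg, if_false]
        exact hf.1 x
  have hg'M : IsMch G (S \ C) g' := by
    refine ⟨hg'inv, fun x hx => ?_⟩
    by_cases hxC : x ∈ C
    · exfalso; apply hx; rw [hg']; simp [hxC]
    · have he : g' x = f x := by rw [hg']; simp [hxC]
      rw [he] at hx ⊢
      exact ⟨(hf.2 x hx).1, Finset.mem_sdiff.mpr ⟨(hf.2 x hx).2, hxC⟩⟩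
  have hsupp : supp f = supp g ∪ supp g' ∧ Disjoint (supp g) (supp g') := by
    constructor
    · ext x
      simp only [mem_supp, Finset.mem_union]
      by_cases hx : x ∈ C
      · rw [hgval x hx]
        have : g' x = x := by rw [hg']; simp [hx]
        rw [this]
        simp
      · rw [hgfix x hx]
        have : g' x = f x := by rw [hg']; simp [hx]
        rw [this]
        simp
    · refine Finset.disjoint_left.mpr (fun x hx hx' => ?_)
      rw [mem_supp] at hx hx'
      by_cases hc : x ∈ C
      · apply hx'; rw [hg']; simp [hc]
      · apply hx; rw [hg]; simp [hc]
  have hcards : (supp g).card + (supp g').card = nu2 G S := by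
    rw [← hcard, hsupp.1, Finset.card_union_of_disjoint hsupp.2]
  have hle1 : (supp g).card ≤ nu2 G C := le_nu2 hgM
  have hle2 : (supp g').card ≤ nu2 G (S \ C) := le_nu2 hg'M
  have hcomb : nu2 G C + nu2 G (S \ C) ≤ nu2 G S :=
    nu2_combine G (Finset.disjoint_sdiff) (cpart_subset G) (Finset.sdiff_subset)
  have hgeq : (supp g).card = nu2 G C := by omega
  refine ⟨g, hgM, hgeq, ?_⟩
  by_cases hc : v ∈ C
  · rw [hgval v hc, hfv]
  · exact hgfix v hc

end A3

section A5

variable {V : Type*} [Fintype V] [DecidableEq V] (G : SimpleGraph V)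

/-- augmenting a matching by one free edge -/
lemma aug_edge {S : Finset V} {f : V → V} (hf : IsMch G S f) {u w : V}
    (huw : G.Adj u w) (huS : u ∈ S) (hwS : w ∈ S) (hfu : f u = u) (hfw : f w = w) :
    (supp f).card + 2 ≤ nu2 G S := by
  have hne : u ≠ w := huw.ne
  set F := fun x => if x = u then w else if x = w then u else f x with hF
  have hFu : F u = w := by rw [hF]; simp
  have hFw : F w = u := by rw [hF]; simp [Ne.symm hne]
  have hFo : ∀ x, x ≠ u → x ≠ w → F x = f x := by intro x h1 h2; rw [hF]; simp [h1, h2]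
  have hfxu : ∀ x, x ≠ u → f x ≠ u := by
    intro x h1 hc
    exact h1 (by rw [← hf.1 x, hc, hfu])
  have hfxw : ∀ x, x ≠ w → f x ≠ w := by
    intro x h1 hc
    exact h1 (by rw [← hf.1 x, hc, hfw])
  have hFinv : Function.Involutive F := by
    intro x
    by_cases h1 : x = u
    · rw [h1, hFu, hFw]
    by_cases h2 : x = w
    · rw [h2, hFw, hFu]
    rw [hFo x h1 h2, hFo (f x) (hfxu x h1) (hfxw x h2)]
    exact hf.1 x
  have hFM : IsMch G S F := by
    refine ⟨hFinv, fun x hx => ?_⟩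
    by_cases h1 : x = u
    · subst h1; rw [hFu]; exact ⟨huw, huS⟩
    by_cases h2 : x = w
    · subst h2; rw [hFw]; exact ⟨huw.symm, hwS⟩
    rw [hFo x h1 h2] at hx ⊢
    exact hf.2 x hx
  have hsupp : supp F = insert u (insert w (supp f)) := by
    ext x
    simp only [mem_supp, Finset.mem_insert]
    by_cases h1 : x = u
    · subst h1; rw [hFu]; simp [Ne.symm hne]
    by_cases h2 : x = w
    · rw [h2, hFw]
      constructor
      · intro _; exact Or.inr (Or.inl rfl)
      · intro _; exact hne
    rw [hFo x h1 h2]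
    simp [h1, h2]
  have hc1 : u ∉ insert w (supp f) := by
    simp only [Finset.mem_insert, mem_supp]
    push_neg
    exact ⟨hne, by rw [hfu]⟩
  have hc2 : w ∉ supp f := by rw [mem_supp]; push_neg; rw [hfw]
  have : (supp F).card = (supp f).card + 2 := by
    rw [hsupp, Finset.card_insert_of_notMem hc1, Finset.card_insert_of_notMem hc2]
  rw [← this]
  exact le_nu2 hFM

lemma gallai (S : Finset V) (C : Finset V) (hCS : C ⊆ S)
    (hclosed : ∀ a b, a ∈ C → (gOn G S).Adj a b → b ∈ C)
    (hconn : ∀ a b, a ∈ C → b ∈ C → (gOn G S).Reachable a b)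
    (hav : ∀ v ∈ C, ∃ f, IsMch G C f ∧ (supp f).card = nu2 G C ∧ f v = v) :
    C.card ≤ nu2 G C + 1 := by
  classical
  by_contra hcon
  push_neg at hcon
  -- `Bad d`: there are a maximum matching and two missed vertices at distance `d`
  set Bad : ℕ → Prop := fun d => ∃ f u w, IsMch G C f ∧ (supp f).card = nu2 G C ∧
    u ∈ C ∧ w ∈ C ∧ u ≠ w ∧ f u = u ∧ f w = w ∧ (gOn G S).dist u w = d with hBad
  have hex : ∃ d, Bad d := by
    obtain ⟨f, hf, hcard⟩ := nu2_spec G C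
    have hfil : C.filter (fun v => ¬ f v = v) = supp f := by
      ext x
      simp only [Finset.mem_filter, mem_supp]
      exact ⟨fun h => h.2, fun h => ⟨(hf.2 x h).2, h⟩⟩
    have hsplit := Finset.card_filter_add_card_filter_not
      (s := C) (p := fun v => f v = v)
    rw [hfil, hcard] at hsplit
    have h2 : 1 < (C.filter (fun v => f v = v)).card := by omega
    obtain ⟨u, hu, w, hw, hne⟩ := Finset.one_lt_card.mp h2
    rw [Finset.mem_filter] at hu hw
    exact ⟨(gOn G S).dist u w, f, u, w, hf, hcard, hu.1, hw.1, hne, hu.2, hw.2, rfl⟩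
  set d0 := Nat.find hex with hd0
  have hbad0 : Bad d0 := Nat.find_spec hex
  have hmin : ∀ d, d < d0 → ¬ Bad d := fun d hd => Nat.find_min hex hd
  obtain ⟨f, u, w, hf, hfcard, huC, hwC, hne, hfu, hfw, hdist⟩ := hbad0
  -- d0 ≥ 2
  have hd2 : 2 ≤ d0 := by
    by_contra hlt
    push_neg at hlt
    interval_cases d0
    · obtain ⟨p, hp⟩ := (hconn u w huC hwC).exists_walk_length_eq_dist
      rw [hdist] at hp
      exact hne (SimpleGraph.Walk.eq_of_length_eq_zero hp)
    · obtain ⟨p, hp⟩ := (hconn u w huC hwC).exists_walk_length_eq_dist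
      rw [hdist] at hp
      cases p with
      | nil => simp at hp
      | cons h q =>
        have hq0 : q.length = 0 := by simpa using hp
        have := SimpleGraph.Walk.eq_of_length_eq_zero hq0
        subst this
        have := aug_edge G hf h.1 huC hwC hfu hfw
        omega
  -- get the second vertex z on a geodesic from u to w
  obtain ⟨p, hp⟩ := (hconn u w huC hwC).exists_walk_length_eq_dist
  rw [hdist] at hp
  obtain ⟨z, hadj, q, hq⟩ : ∃ z, (gOn G S).Adj u z ∧ ∃ q : (gOn G S).Walk z w,
      q.length = d0 - 1 := by
    cases p with
    | nil => simp at hp; omega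
    | cons h q =>
      refine ⟨_, h, q, ?_⟩
      simp only [SimpleGraph.Walk.length_cons] at hp
      omega
  have hzC : z ∈ C := hclosed u z huC hadj
  have hzu : u ≠ z := hadj.ne
  have hdistuz : (gOn G S).dist u z ≤ 1 := by
    have := SimpleGraph.dist_le (SimpleGraph.Walk.cons hadj SimpleGraph.Walk.nil)
    simpa using this
  have hdistzw : (gOn G S).dist z w ≤ d0 - 1 := by
    have := SimpleGraph.dist_le q
    omega
  have hzw : z ≠ w := by
    rintro rfl
    have := SimpleGraph.dist_le (SimpleGraph.Walk.cons hadj SimpleGraph.Walk.nil)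
    simp at this
    omega
  have hwu : w ≠ z := fun hc => hzw hc.symm
  -- z is matched by f
  have hfz : f z ≠ z := by
    intro hc
    refine hmin ((gOn G S).dist z w) (by omega) ?_
    exact ⟨f, z, w, hf, hfcard, hzC, hwC, hzw, hc, hfw, rfl⟩
  -- get a maximum matching g missing z
  obtain ⟨g, hg, hgcard, hgz⟩ := hav z hzC
  have hgu : g u ≠ u := by
    intro hc
    refine hmin ((gOn G S).dist u z) (by omega) ?_
    exact ⟨g, u, z, hg, hgcard, huC, hzC, hzu, hc, hgz, rfl⟩
  -- the alternating sequence machinery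
  set alt : ℕ → (V → V) := fun k => if Even k then g else f with halt
  have haltE : ∀ k, Even k → alt k = g := by intro k h; simp [halt, h]
  have haltO : ∀ k, ¬ Even k → alt k = f := by intro k h; simp [halt, h]
  have haltinv : ∀ k, Function.Involutive (alt k) := by
    intro k
    by_cases h : Even k
    · rw [haltE k h]; exact hg.1
    · rw [haltO k h]; exact hf.1
  have haltcong : ∀ a b, (Even a ↔ Even b) → alt a = alt b := by
    intro a b hab
    by_cases h : Even a
    · rw [haltE a h, haltE b (hab.mp h)]
    · rw [haltO a h, haltO b (fun hc => h (hab.mpr hc))]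
  set seq : ℕ → V := fun k => Nat.rec (motive := fun _ => V) u (fun k ih => alt k ih) k
    with hseqdef
  have seq0 : seq 0 = u := rfl
  have seqS : ∀ k, seq (k + 1) = alt k (seq k) := fun k => rfl
  have seqPrev : ∀ k, alt k (seq (k+1)) = seq k := by
    intro k; rw [seqS k]; exact haltinv k (seq k)
  have hseq1 : seq 1 = g u := by
    have h := seqS 0
    rw [seq0, haltE 0 Even.zero] at h
    exact h
  have inj : ∀ N, (∀ k, k < N → alt k (seq k) ≠ seq k) →
      ∀ j, j ≤ N → ∀ i, i < j → seq i ≠ seq j := by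
    intro N hN j
    induction j using Nat.strong_induction_on with
    | _ j ih =>
      intro hjN i hij heq
      obtain ⟨jj, rfl⟩ : ∃ jj, j = jj + 1 := ⟨j - 1, by omega⟩
      rcases Nat.eq_zero_or_pos i with rfl | hi
      · rcases Nat.eq_zero_or_pos jj with rfl | hjj
        · have heq' : seq 0 = seq 1 := heq
          rw [seq0, hseq1] at heq'
          exact hgu heq'.symm
        · by_cases hpar : Even jj
          · have h1 : seq (jj+1) = g (seq jj) := by rw [seqS jj, haltE jj hpar]
            have h2 : seq jj = g (seq (jj+1)) := by rw [h1]; exact (hg.1 _).symm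
            rw [← heq, seq0] at h2
            rw [← hseq1] at h2
            have hjj2 : 1 < jj := by
              rcases Nat.lt_or_ge 1 jj with h | h
              · exact h
              · exfalso
                have hjj1 : jj = 1 := by omega
                rw [hjj1] at hpar
                exact (by decide : ¬ Even 1) hpar
            exact ih jj (by omega) (by omega) 1 hjj2 h2.symm
          · have h1 : seq (jj+1) = f (seq jj) := by rw [seqS jj, haltO jj hpar]
            have h2 : seq jj = f (seq (jj+1)) := by rw [h1]; exact (hf.1 _).symm
            rw [← heq, seq0, hfu, ← seq0] at h2
            exact ih jj (by omega) (by omega) 0 hjj h2.symm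
      · by_cases hji : jj = i
        · subst hji
          exact hN jj (by omega) ((seqS jj).symm.trans heq.symm)
        · obtain ⟨ii, rfl⟩ : ∃ ii, i = ii + 1 := ⟨i - 1, by omega⟩
          by_cases hpar : Even ii ↔ Even jj
          · have e1 : alt ii (seq (ii+1)) = seq ii := seqPrev ii
            have e2 : alt jj (seq (jj+1)) = seq jj := seqPrev jj
            have h3 : seq ii = seq jj := by
              rw [← e1, ← e2, heq, haltcong ii jj hpar]
            exact ih jj (by omega) (by omega) ii (by omega) h3
          · have hpar2 : Even (ii+1) ↔ Even jj := by
              rw [Nat.even_add_one]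
              by_cases h1 : Even ii <;> by_cases h2 : Even jj <;> tauto
            have h3 : seq (ii+1+1) = seq jj := by
              rw [seqS (ii+1), heq, haltcong (ii+1) jj hpar2]
              exact seqPrev jj
            have hlt2 : ii + 2 < jj := by
              have hle : ii + 2 ≤ jj := by omega
              rcases eq_or_lt_of_le hle with he | hl
              · exfalso
                apply hpar
                rw [← he, Nat.even_add_one, Nat.even_add_one, not_not]
              · exact hl
            have h3' : seq (ii+2) = seq jj := h3
            exact ih jj (by omega) (by omega) (ii+2) hlt2 h3'
  have hterm : ∃ k, alt k (seq k) = seq k := by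
    by_contra hc
    push_neg at hc
    obtain ⟨a, b, hab, heq⟩ := Finite.exists_ne_map_eq_of_infinite seq
    rcases hab.lt_or_gt with h | h
    · exact inj (max a b) (fun k _ => hc k) b (le_max_right a b) a h heq
    · exact inj (max a b) (fun k _ => hc k) a (le_max_left a b) b h heq.symm
  set T := Nat.find hterm with hT
  have hstop : alt T (seq T) = seq T := Nat.find_spec hterm
  have hnostop : ∀ k, k < T → alt k (seq k) ≠ seq k := fun k hk => Nat.find_min hterm hk
  have hTpos : 0 < T := by
    rcases Nat.eq_zero_or_pos T with h0 | h
    · exfalso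
      apply hgu
      have h1 := hstop
      rw [h0, seq0, haltE 0 Even.zero] at h1
      exact h1
    · exact h
  have injT : ∀ i j, i ≤ T → j ≤ T → seq i = seq j → i = j := by
    intro i j hi hj heq
    rcases lt_trichotomy i j with h | h | h
    · exact absurd heq (inj T hnostop j hj i h)
    · exact h
    · exact absurd heq.symm (inj T hnostop i hi j h)
  have hseqC : ∀ k, seq k ∈ C := by
    intro k
    induction k with
    | zero => exact huC
    | succ k ihk =>
      rw [seqS k]
      by_cases hmv : alt k (seq k) = seq k
      · rw [hmv]; exact ihk
      · by_cases hp : Even k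
        · rw [haltE k hp] at hmv ⊢; exact hg.mem_right hmv
        · rw [haltO k hp] at hmv ⊢; exact hf.mem_right hmv
  have hgE : ∀ k, Even k → g (seq k) = seq (k+1) := by
    intro k hk; rw [seqS k, haltE k hk]
  have hfO : ∀ k, ¬ Even k → f (seq k) = seq (k+1) := by
    intro k hk; rw [seqS k, haltO k hk]
  have hgO : ∀ k, ¬ Even (k+1) → g (seq (k+1)) = seq k := by
    intro k hk
    have he : Even k := by rwa [Nat.even_add_one, not_not] at hk
    rw [← hgE k he]; exact hg.1 _
  have hfE : ∀ k, Even (k+1) → f (seq (k+1)) = seq k := by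
    intro k hk
    have ho : ¬ Even k := by rw [Nat.even_add_one] at hk; exact hk
    rw [← hfO k ho]; exact hf.1 _
  set P := (Finset.range (T+1)).image seq with hPdef
  have hPmem : ∀ x, x ∈ P ↔ ∃ k, k ≤ T ∧ seq k = x := by
    intro x
    simp only [hPdef, Finset.mem_image, Finset.mem_range, Nat.lt_succ_iff]
  have hPseq : ∀ k, k ≤ T → seq k ∈ P := by
    intro k hk; rw [hPmem]; exact ⟨k, hk, rfl⟩
  have hPcard : P.card = T + 1 := by
    rw [hPdef, Finset.card_image_of_injOn, Finset.card_range]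
    intro a ha b hb hab
    rw [Finset.mem_coe, Finset.mem_range, Nat.lt_succ_iff] at ha hb
    exact injT a b ha hb hab
  have huP : u ∈ P := seq0 ▸ hPseq 0 (by omega)
  by_cases hTeven : Even T
  · -- T even
    have hstopg : g (seq T) = seq T := by rw [← haltE T hTeven]; exact hstop
    have key3 : ∀ k, k < T → g (seq k) ≠ seq k := by
      intro k hkT
      by_cases hp : Even k
      · rw [hgE k hp]
        intro hc
        have := injT (k+1) k (by omega) (by omega) hc; omega
      · have hk0 : k ≠ 0 := by rintro rfl; exact hp Even.zero
        obtain ⟨kk, rfl⟩ : ∃ kk, k = kk + 1 := ⟨k-1, by omega⟩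
        rw [hgO kk hp]
        intro hc
        have := injT kk (kk+1) (by omega) (by omega) hc; omega
    have keyf : ∀ k, 1 ≤ k → k ≤ T → f (seq k) ∈ P ∧ f (seq k) ≠ u ∧ f (seq k) ≠ seq k := by
      intro k h1 hk
      by_cases hp : Even k
      · obtain ⟨kk, rfl⟩ : ∃ kk, k = kk+1 := ⟨k-1, by omega⟩
        rw [hfE kk hp]
        refine ⟨hPseq kk (by omega), ?_, ?_⟩
        · rw [← seq0]
          intro hc
          have hkk0 : kk ≠ 0 := by
            rintro rfl
            exact (by decide : ¬ Even 1) hp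
          have := injT kk 0 (by omega) (by omega) hc; omega
        · intro hc
          have := injT kk (kk+1) (by omega) (by omega) hc; omega
      · have hkT : k < T := lt_of_le_of_ne hk (by rintro rfl; exact hp hTeven)
        rw [hfO k hp]
        refine ⟨hPseq (k+1) (by omega), ?_, ?_⟩
        · rw [← seq0]
          intro hc
          have := injT (k+1) 0 (by omega) (by omega) hc; omega
        · intro hc
          have := injT (k+1) k (by omega) (by omega) hc; omega
    have key2g : ∀ x, g x ∈ P → x ∈ P := by
      intro x hx
      rw [hPmem] at hx
      obtain ⟨k, hk, hkx⟩ := hx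
      have hxv : x = g (seq k) := by rw [hkx]; exact (hg.1 x).symm
      by_cases hp : Even k
      · by_cases hkT : k = T
        · rw [hkT, hstopg] at hxv
          exact hxv ▸ hPseq T le_rfl
        · rw [hgE k hp] at hxv
          exact hxv ▸ hPseq (k+1) (by omega)
      · have hk0 : k ≠ 0 := by rintro rfl; exact hp Even.zero
        obtain ⟨kk, rfl⟩ : ∃ kk, k = kk + 1 := ⟨k-1, by omega⟩
        rw [hgO kk hp] at hxv
        exact hxv ▸ hPseq kk (by omega)
    have key2f : ∀ x, f x ∈ P → x ∈ P := by
      intro x hx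
      rw [hPmem] at hx
      obtain ⟨k, hk, hkx⟩ := hx
      have hxv : x = f (seq k) := by rw [hkx]; exact (hf.1 x).symm
      rcases Nat.eq_zero_or_pos k with rfl | hkpos
      · rw [seq0, hfu, ← seq0] at hxv
        exact hxv ▸ hPseq 0 (by omega)
      · by_cases hp : Even k
        · obtain ⟨kk, rfl⟩ : ∃ kk, k = kk + 1 := ⟨k-1, by omega⟩
          rw [hfE kk hp] at hxv
          exact hxv ▸ hPseq kk (by omega)
        · have hkT : k < T := lt_of_le_of_ne hk (by rintro rfl; exact hp hTeven)
          rw [hfO k hp] at hxv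
          exact hxv ▸ hPseq (k+1) (by omega)
    classical
    by_cases hvTz : seq T = z
    · -- end of the path is z : swap f along the path, miss z and w
      set Fm := fun x => if x = seq T then seq T else if x ∈ P then g x else f x with hFm
      have hFmT : Fm (seq T) = seq T := by rw [hFm]; simp
      have hFmP : ∀ x, x ∈ P → x ≠ seq T → Fm x = g x := by
        intro x hx hxT; rw [hFm]; simp [hx, hxT]
      have hFmnP : ∀ x, x ∉ P → Fm x = f x := by
        intro x hx
        have hxT : x ≠ seq T := fun hc => hx (hc ▸ hPseq T le_rfl)
        rw [hFm]; simp [hx, hxT]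
      have keyg : ∀ x, x ∈ P → x ≠ seq T → g x ∈ P ∧ g x ≠ seq T ∧ g x ≠ x := by
        intro x hx hxT
        rw [hPmem] at hx
        obtain ⟨k, hk, rfl⟩ := hx
        have hkT : k ≠ T := fun hc => hxT (by rw [hc])
        by_cases hp : Even k
        · rw [hgE k hp]
          refine ⟨hPseq (k+1) (by omega), ?_, ?_⟩
          · intro hc
            have hk1T := injT (k+1) T (by omega) le_rfl hc
            rw [← hk1T] at hTeven
            rw [Nat.even_add_one] at hTeven
            exact hTeven hp
          · intro hc
            have := injT (k+1) k (by omega) (by omega) hc; omega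
        · have hk0 : k ≠ 0 := by rintro rfl; exact hp Even.zero
          obtain ⟨kk, rfl⟩ : ∃ kk, k = kk + 1 := ⟨k-1, by omega⟩
          rw [hgO kk hp]
          refine ⟨hPseq kk (by omega), ?_, ?_⟩
          · intro hc
            have := injT kk T (by omega) le_rfl hc; omega
          · intro hc
            have := injT kk (kk+1) (by omega) (by omega) hc; omega
      have hFminv : Function.Involutive Fm := by
        intro x
        by_cases hxT : x = seq T
        · rw [hxT, hFmT, hFmT]
        by_cases hx : x ∈ P
        · obtain ⟨h1, h2, _⟩ := keyg x hx hxT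
          rw [hFmP x hx hxT, hFmP _ h1 h2]
          exact hg.1 x
        · have hfx : f x ∉ P := fun hc => hx (key2f x hc)
          have hfxT : f x ≠ seq T := fun hc => hfx (hc ▸ hPseq T le_rfl)
          rw [hFmnP x hx, hFmnP _ hfx]
          exact hf.1 x
      have hFmM : IsMch G C Fm := by
        refine ⟨hFminv, fun x hx => ?_⟩
        by_cases hxT : x = seq T
        · exact absurd (hxT ▸ hFmT) (hxT ▸ hx)
        by_cases hxP : x ∈ P
        · rw [hFmP x hxP hxT] at hx ⊢; exact hg.2 x hx
        · rw [hFmnP x hxP] at hx ⊢; exact hf.2 x hx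
      -- Fm misses z = seq T and w
      have hwP : w ∉ P := by
        intro hw
        rw [hPmem] at hw
        obtain ⟨k, hk, hkw⟩ := hw
        rcases Nat.eq_zero_or_pos k with rfl | hkpos
        · rw [seq0] at hkw; exact hne hkw
        · have := (keyf k (by omega) hk).2.2
          rw [hkw, hfw] at this
          exact this rfl
      have hwT : w ≠ seq T := by rw [hvTz]; exact fun hc => hzw hc.symm
      have hFmw : Fm w = w := by rw [hFmnP w hwP]; exact hfw
      have hFmz : Fm z = z := by rw [← hvTz]; exact hFmT
      -- cardinality : supp Fm = (P.erase (seq T)) ∪ (supp f \ P)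
      have hsuppFm : supp Fm = (P.erase (seq T)) ∪ (supp f \ P) := by
        ext x
        simp only [mem_supp, Finset.mem_union, Finset.mem_sdiff, Finset.mem_erase]
        by_cases hxT : x = seq T
        · subst hxT
          rw [hFmT]
          simp [hPseq T le_rfl]
        by_cases hx : x ∈ P
        · rw [hFmP x hx hxT]
          simp [hx, hxT, (keyg x hx hxT).2.2]
        · rw [hFmnP x hx]
          simp [hx, hxT, mem_supp]
      have hfiP : supp f ∩ P = P.erase u := by
        ext x
        simp only [Finset.mem_inter, mem_supp, Finset.mem_erase]
        constructor
        · rintro ⟨hfx, hxP⟩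
          exact ⟨fun hc => hfx (hc ▸ hfu), hxP⟩
        · rintro ⟨hxu, hxP⟩
          refine ⟨?_, hxP⟩
          rw [hPmem] at hxP
          obtain ⟨k, hk, rfl⟩ := hxP
          have hk0 : k ≠ 0 := fun hc => hxu (by rw [hc, seq0])
          exact (keyf k (by omega) hk).2.2
      have hc1 : (P.erase (seq T)).card + 1 = P.card :=
        Finset.card_erase_add_one (hPseq T le_rfl)
      have hc2 : (P.erase u).card + 1 = P.card := Finset.card_erase_add_one huP
      have hc3 : (supp f \ P).card + (supp f ∩ P).card = (supp f).card :=
        Finset.card_sdiff_add_card_inter _ _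
      have hc4 : (supp Fm).card = (P.erase (seq T)).card + (supp f \ P).card := by
        rw [hsuppFm, Finset.card_union_of_disjoint (Finset.disjoint_left.mpr
          (fun x hx hx' => (Finset.mem_sdiff.mp hx').2 (Finset.mem_of_mem_erase hx)))]
      have hc5 : (supp f ∩ P).card = (P.erase u).card := by rw [hfiP]
      have hFmcard : (supp Fm).card = nu2 G C := by
        have := le_nu2 hFmM
        omega
      refine hmin ((gOn G S).dist z w) (by omega) ?_
      exact ⟨Fm, z, w, hFmM, hFmcard, hzC, hwC, hzw, hFmz, hFmw, rfl⟩
    · -- end of the path is not z : swap g along the path, miss u and z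
      set Gm := fun x => if x = u then u else if x ∈ P then f x else g x with hGm
      have hGmu : Gm u = u := by rw [hGm]; simp
      have hGmP : ∀ x, x ∈ P → x ≠ u → Gm x = f x := by
        intro x hx hxu; rw [hGm]; simp [hx, hxu]
      have hGmnP : ∀ x, x ∉ P → Gm x = g x := by
        intro x hx
        have hxu : x ≠ u := fun hc => hx (hc ▸ huP)
        rw [hGm]; simp [hx, hxu]
      have keyfP : ∀ x, x ∈ P → x ≠ u → f x ∈ P ∧ f x ≠ u ∧ f x ≠ x := by
        intro x hx hxu
        rw [hPmem] at hx
        obtain ⟨k, hk, rfl⟩ := hx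
        have hk0 : k ≠ 0 := fun hc => hxu (by rw [hc, seq0])
        exact keyf k (by omega) hk
      have hGminv : Function.Involutive Gm := by
        intro x
        by_cases hxu : x = u
        · rw [hxu, hGmu, hGmu]
        by_cases hx : x ∈ P
        · obtain ⟨h1, h2, _⟩ := keyfP x hx hxu
          rw [hGmP x hx hxu, hGmP _ h1 h2]
          exact hf.1 x
        · have hgx : g x ∉ P := fun hc => hx (key2g x hc)
          rw [hGmnP x hx, hGmnP _ hgx]
          exact hg.1 x
      have hGmM : IsMch G C Gm := by
        refine ⟨hGminv, fun x hx => ?_⟩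
        by_cases hxu : x = u
        · exact absurd (hxu ▸ hGmu) (hxu ▸ hx)
        by_cases hxP : x ∈ P
        · rw [hGmP x hxP hxu] at hx ⊢; exact hf.2 x hx
        · rw [hGmnP x hxP] at hx ⊢; exact hg.2 x hx
      have hzP : z ∉ P := by
        intro hz
        rw [hPmem] at hz
        obtain ⟨k, hk, hkz⟩ := hz
        rcases Nat.eq_zero_or_pos k with rfl | hkpos
        · rw [seq0] at hkz; exact hzu hkz
        · have hkT : k ≠ T := fun hc => hvTz (by rw [← hc, hkz])
          have := key3 k (by omega)
          rw [hkz, hgz] at this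
          exact this rfl
      have hGmz : Gm z = z := by rw [hGmnP z hzP]; exact hgz
      have hsuppGm : supp Gm = (P.erase u) ∪ (supp g \ P) := by
        ext x
        simp only [mem_supp, Finset.mem_union, Finset.mem_sdiff, Finset.mem_erase]
        by_cases hxu : x = u
        · subst hxu
          rw [hGmu]
          simp [huP]
        by_cases hx : x ∈ P
        · rw [hGmP x hx hxu]
          simp [hx, hxu, (keyfP x hx hxu).2.2]
        · rw [hGmnP x hx]
          simp [hx, hxu, mem_supp]
      have hgiP : supp g ∩ P = P.erase (seq T) := by
        ext x
        simp only [Finset.mem_inter, mem_supp, Finset.mem_erase]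
        constructor
        · rintro ⟨hgx, hxP⟩
          refine ⟨fun hc => hgx (hc ▸ hstopg), hxP⟩
        · rintro ⟨hxT, hxP⟩
          refine ⟨?_, hxP⟩
          rw [hPmem] at hxP
          obtain ⟨k, hk, rfl⟩ := hxP
          have hkT : k ≠ T := fun hc => hxT (by rw [hc])
          exact key3 k (by omega)
      have hc1 : (P.erase u).card + 1 = P.card := Finset.card_erase_add_one huP
      have hc2 : (P.erase (seq T)).card + 1 = P.card :=
        Finset.card_erase_add_one (hPseq T le_rfl)
      have hc3 : (supp g \ P).card + (supp g ∩ P).card = (supp g).card :=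
        Finset.card_sdiff_add_card_inter _ _
      have hc4 : (supp Gm).card = (P.erase u).card + (supp g \ P).card := by
        rw [hsuppGm, Finset.card_union_of_disjoint (Finset.disjoint_left.mpr
          (fun x hx hx' => (Finset.mem_sdiff.mp hx').2 (Finset.mem_of_mem_erase hx)))]
      have hc5 : (supp g ∩ P).card = (P.erase (seq T)).card := by rw [hgiP]
      have hGmcard : (supp Gm).card = nu2 G C := by
        have := le_nu2 hGmM
        omega
      refine hmin ((gOn G S).dist u z) (by omega) ?_
      exact ⟨Gm, u, z, hGmM, hGmcard, huC, hzC, hzu, hGmu, hGmz, rfl⟩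
  · -- T odd : augmenting path, contradiction with maximality of f
    have hstopf : f (seq T) = seq T := by rw [← haltO T hTeven]; exact hstop
    have key1 : ∀ k, k ≤ T → g (seq k) ∈ P ∧ g (seq k) ≠ seq k := by
      intro k hk
      by_cases hp : Even k
      · have hkT : k < T := lt_of_le_of_ne hk (by rintro rfl; exact hTeven hp)
        rw [hgE k hp]
        refine ⟨hPseq (k+1) (by omega), fun hc => ?_⟩
        have := injT (k+1) k (by omega) (by omega) hc; omega
      · have hk0 : k ≠ 0 := by rintro rfl; exact hp Even.zero
        obtain ⟨kk, rfl⟩ : ∃ kk, k = kk + 1 := ⟨k-1, by omega⟩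
        rw [hgO kk hp]
        refine ⟨hPseq kk (by omega), fun hc => ?_⟩
        have := injT kk (kk+1) (by omega) (by omega) hc; omega
    have key2 : ∀ x, f x ∈ P → x ∈ P := by
      intro x hx
      rw [hPmem] at hx
      obtain ⟨k, hk, hkx⟩ := hx
      have hxv : x = f (seq k) := by rw [hkx]; exact (hf.1 x).symm
      rcases Nat.eq_zero_or_pos k with rfl | hkpos
      · rw [seq0, hfu, ← seq0] at hxv
        exact hxv ▸ hPseq 0 (by omega)
      · by_cases hp : Even k
        · obtain ⟨kk, rfl⟩ : ∃ kk, k = kk + 1 := ⟨k-1, by omega⟩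
          rw [hfE kk hp] at hxv
          exact hxv ▸ hPseq kk (by omega)
        · by_cases hkT : k = T
          · rw [hkT, hstopf] at hxv
            exact hxv ▸ hPseq T le_rfl
          · have hkT' : k < T := lt_of_le_of_ne hk hkT
            rw [hfO k hp] at hxv
            exact hxv ▸ hPseq (k+1) (by omega)
    classical
    set F := fun x => if x ∈ P then g x else f x with hFdef
    have hFP : ∀ x, x ∈ P → F x = g x := fun x hx => by rw [hFdef]; simp [hx]
    have hFnP : ∀ x, x ∉ P → F x = f x := fun x hx => by rw [hFdef]; simp [hx]
    have hgP : ∀ x, x ∈ P → g x ∈ P ∧ g x ≠ x := by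
      intro x hx
      rw [hPmem] at hx
      obtain ⟨k, hk, rfl⟩ := hx
      exact key1 k hk
    have hFinv : Function.Involutive F := by
      intro x
      by_cases hx : x ∈ P
      · rw [hFP x hx, hFP _ (hgP x hx).1]; exact hg.1 x
      · have hfxP : f x ∉ P := fun hc => hx (key2 x hc)
        rw [hFnP x hx, hFnP _ hfxP]; exact hf.1 x
    have hFM : IsMch G C F := by
      refine ⟨hFinv, fun x hx => ?_⟩
      by_cases hxP : x ∈ P
      · rw [hFP x hxP] at hx ⊢; exact hg.2 x hx
      · rw [hFnP x hxP] at hx ⊢; exact hf.2 x hx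
    have hsuppF : supp F = P ∪ (supp f \ P) := by
      ext x
      simp only [mem_supp, Finset.mem_union, Finset.mem_sdiff]
      by_cases hx : x ∈ P
      · rw [hFP x hx]
        simp [hx, (hgP x hx).2]
      · rw [hFnP x hx]
        simp [hx, mem_supp]
    have hfP : supp f ∩ P = P \ {seq 0, seq T} := by
      ext x
      simp only [Finset.mem_inter, mem_supp, Finset.mem_sdiff, Finset.mem_insert,
        Finset.mem_singleton]
      constructor
      · rintro ⟨hfx, hxP⟩
        refine ⟨hxP, ?_⟩
        rintro (rfl | rfl)
        · exact hfx hfu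
        · exact hfx hstopf
      · rintro ⟨hxP, hns⟩
        push_neg at hns
        refine ⟨?_, hxP⟩
        rw [hPmem] at hxP
        obtain ⟨k, hk, rfl⟩ := hxP
        have hk0 : k ≠ 0 := fun hc => hns.1 (by rw [hc])
        have hkT : k ≠ T := fun hc => hns.2 (by rw [hc])
        by_cases hp : Even k
        · obtain ⟨kk, rfl⟩ : ∃ kk, k = kk+1 := ⟨k-1, by omega⟩
          rw [hfE kk hp]
          intro hc
          have := injT kk (kk+1) (by omega) (by omega) hc; omega
        · have hkT' : k < T := by omega
          rw [hfO k hp]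
          intro hc
          have := injT (k+1) k (by omega) (by omega) hc; omega
    have hsub : ({seq 0, seq T} : Finset V) ⊆ P := by
      intro x hx
      rcases Finset.mem_insert.mp hx with rfl | hx
      · exact hPseq 0 (by omega)
      · rw [Finset.mem_singleton] at hx
        subst hx
        exact hPseq T le_rfl
    have hpair : ({seq 0, seq T} : Finset V).card = 2 := by
      rw [Finset.card_insert_of_notMem (by
        rw [Finset.mem_singleton]
        intro hc
        have := injT 0 T (by omega) le_rfl hc
        omega), Finset.card_singleton]
    have hcard1 : (supp f ∩ P).card + 2 = P.card := by
      rw [hfP, Finset.card_sdiff_of_subset hsub, hpair, hPcard]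
      omega
    have hcard2 : (supp f \ P).card + (supp f ∩ P).card = (supp f).card :=
      Finset.card_sdiff_add_card_inter _ _
    have hcard3 : (supp F).card = P.card + (supp f \ P).card := by
      rw [hsuppF, Finset.card_union_of_disjoint (Finset.disjoint_left.mpr
        (fun x hx hx' => (Finset.mem_sdiff.mp hx').2 hx))]
    have hle := le_nu2 hFM
    omega


end A5

section A6

variable {V : Type*} [Fintype V] [DecidableEq V] (G : SimpleGraph V) [DecidableRel G.Adj]

lemma main (D : ℕ) :
    ∀ m (S : Finset V), S.card ≤ m → (∀ v ∈ S, degIn G S v ≤ D) →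
      2 * edgesIn G S ≤ nu2 G S * (D + 1) := by
  intro m
  induction m with
  | zero =>
    intro S hS _
    have hempty : S = ∅ := Finset.card_eq_zero.mp (le_antisymm hS (Nat.zero_le _))
    rw [hempty, edgesIn_empty]
    simp
  | succ m ih =>
    intro S hS hdeg
    by_cases hA : ∃ v ∈ S, nu2 G (S.erase v) + 2 ≤ nu2 G S
    · obtain ⟨v, hv, hnu⟩ := hA
      have hins : S = insert v (S.erase v) := (Finset.insert_erase hv).symm
      have hE : edgesIn G S = edgesIn G (S.erase v) + degIn G (S.erase v) v := by
        conv_lhs => rw [hins]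
        exact edgesIn_insert G (Finset.notMem_erase v S)
      have hdeg' : degIn G (S.erase v) v ≤ D :=
        le_trans (degIn_mono G (Finset.erase_subset v S) v) (hdeg v hv)
      have hcard : (S.erase v).card ≤ m := by
        have h1 := Finset.card_erase_of_mem hv
        have h2 := Finset.card_pos.mpr ⟨v, hv⟩
        omega
      have hih := ih (S.erase v) hcard (fun w hw =>
        le_trans (degIn_mono G (Finset.erase_subset v S) w)
          (hdeg w (Finset.mem_of_mem_erase hw)))
      have hmul : (nu2 G (S.erase v) + 2) * (D+1) ≤ nu2 G S * (D+1) :=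
        Nat.mul_le_mul_right _ hnu
      have hexp : (nu2 G (S.erase v) + 2) * (D+1) = nu2 G (S.erase v) * (D+1) + 2*D + 2 := by
        ring
      omega
    · push_neg at hA
      have havoid : ∀ v ∈ S, ∃ f, IsMch G S f ∧ (supp f).card = nu2 G S ∧ f v = v := by
        intro v hv
        have h1 : nu2 G (S.erase v) = nu2 G S := by
          have hle := nu2_mono (G := G) (Finset.erase_subset v S)
          obtain ⟨a, ha⟩ := even_nu2 G S
          obtain ⟨b, hb⟩ := even_nu2 G (S.erase v)
          have := hA v hv
          omega
        obtain ⟨f, hf, hc⟩ := nu2_spec G (S.erase v)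
        refine ⟨f, hf.mono (Finset.erase_subset v S), by rw [hc, h1], ?_⟩
        by_contra hfv
        exact (Finset.notMem_erase v S) (hf.2 v hfv).2
      have hcomp : ∀ c ∈ comps G S,
          2 * edgesIn G (cpart G S c) ≤ nu2 G (cpart G S c) * (D+1) := by
        intro c _
        set C := cpart G S c with hC
        have hCS : C ⊆ S := cpart_subset G
        have hgal : C.card ≤ nu2 G C + 1 := by
          refine gallai G S C hCS ?_ ?_ ?_
          · intro a b ha hab
            exact adj_mem_cpart G ha hab.1 hab.2.2
          · intro a b ha hb
            rw [hC, mem_cpart] at ha hb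
            exact SimpleGraph.ConnectedComponent.exact (ha.2.trans hb.2.symm)
          · intro v hv
            obtain ⟨f, h1, h2, h3⟩ := havoid v (hCS hv)
            exact avoid_transfer G hv h1 h2 h3
        have hhs : 2 * edgesIn G C = ∑ v ∈ C, degIn G C v := handshake G C
        by_cases hsize : C.card ≤ D + 1
        · have h1 : ∀ v ∈ C, degIn G C v ≤ C.card - 1 := by
            intro v hv
            have ha := degIn_le_card_sub_one G C v
            have hb := Finset.card_erase_of_mem hv
            omega
          have h2 : 2 * edgesIn G C ≤ C.card * (C.card - 1) := by
            rw [hhs]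
            calc ∑ v ∈ C, degIn G C v ≤ ∑ _v ∈ C, (C.card - 1) := Finset.sum_le_sum h1
              _ = C.card * (C.card - 1) := by rw [Finset.sum_const, smul_eq_mul]
          have h3 : C.card * (C.card - 1) ≤ nu2 G C * (D+1) := by
            calc C.card * (C.card - 1) ≤ (D+1) * (C.card - 1) :=
                  Nat.mul_le_mul_right _ hsize
              _ ≤ (D+1) * nu2 G C := Nat.mul_le_mul_left _ (by omega)
              _ = nu2 G C * (D+1) := mul_comm _ _
          omega
        · have h1 : ∀ v ∈ C, degIn G C v ≤ D := fun v hv =>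
            le_trans (degIn_mono G hCS v) (hdeg v (hCS hv))
          have h2 : 2 * edgesIn G C ≤ C.card * D := by
            rw [hhs]
            calc ∑ v ∈ C, degIn G C v ≤ ∑ _v ∈ C, D := Finset.sum_le_sum h1
              _ = C.card * D := by rw [Finset.sum_const, smul_eq_mul]
          have h3 : C.card * D ≤ (C.card - 1) * (D+1) := by
            obtain ⟨k, hk⟩ : ∃ k, C.card = k + 1 := ⟨C.card - 1, by omega⟩
            have hDk : D + 1 ≤ k := by omega
            rw [hk]
            have hred : (k+1) - 1 = k := rfl
            rw [hred]
            nlinarith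
          have h4 : (C.card - 1) * (D+1) ≤ nu2 G C * (D+1) :=
            Nat.mul_le_mul_right _ (by omega)
          omega
      have hsum := edgesIn_comp_sum G S
      have hsum2 := nu2_comp_sum G S
      calc 2 * edgesIn G S = ∑ c ∈ comps G S, 2 * edgesIn G (cpart G S c) := by
            rw [hsum, Finset.mul_sum]
        _ ≤ ∑ c ∈ comps G S, nu2 G (cpart G S c) * (D+1) := Finset.sum_le_sum hcomp
        _ = (∑ c ∈ comps G S, nu2 G (cpart G S c)) * (D+1) := by rw [Finset.sum_mul]
        _ ≤ nu2 G S * (D+1) := Nat.mul_le_mul_right _ hsum2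


end A6

section A7

variable {V : Type*} [Fintype V] [DecidableEq V] (G : SimpleGraph V)

lemma nu2_le_two_mul_matching (S : Finset V) : nu2 G S ≤ 2 * matchingNumberOn G S := by
  obtain ⟨f, hf, hcard⟩ := nu2_spec G S
  set M := medges f with hMdef
  have hM1 : ↑M ⊆ G.edgeSet := by
    intro e he
    rw [Finset.mem_coe, hMdef, medges, Finset.mem_image] at he
    obtain ⟨a, ha, rfl⟩ := he
    exact (hf.2 a (mem_supp.mp ha)).1
  have hM2 : ∀ e ∈ M, ∀ v ∈ e, v ∈ S := by
    intro e he v hv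
    rw [hMdef, medges, Finset.mem_image] at he
    obtain ⟨a, ha, rfl⟩ := he
    rcases Sym2.mem_iff.mp hv with rfl | rfl
    · exact (hf.2 _ (mem_supp.mp ha)).2
    · exact hf.mem_right (mem_supp.mp ha)
  have hM3 : (M : Set (Sym2 V)).Pairwise fun e f' => ∀ v, v ∈ e → v ∉ f' := by
    intro e he e' he' hnee v hv hv'
    rw [Finset.mem_coe, hMdef, medges, Finset.mem_image] at he he'
    obtain ⟨a, _, rfl⟩ := he
    obtain ⟨b, _, rfl⟩ := he'
    have h1 : s(a, f a) = s(v, f v) := by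
      rcases Sym2.mem_iff.mp hv with rfl | rfl
      · rfl
      · rw [hf.1 a]; exact Sym2.eq_swap
    have h2 : s(b, f b) = s(v, f v) := by
      rcases Sym2.mem_iff.mp hv' with rfl | rfl
      · rfl
      · rw [hf.1 b]; exact Sym2.eq_swap
    exact hnee (h1.trans h2.symm)
  have hmem : M.card ∈ {k | ∃ M : Finset (Sym2 V), ↑M ⊆ G.edgeSet ∧
      (∀ e ∈ M, ∀ v ∈ e, v ∈ S) ∧ M.card = k ∧
      (M : Set (Sym2 V)).Pairwise fun e f => ∀ v, v ∈ e → v ∉ f} :=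
    ⟨M, hM1, hM2, rfl, hM3⟩
  have hb : BddAbove {k | ∃ M : Finset (Sym2 V), ↑M ⊆ G.edgeSet ∧
      (∀ e ∈ M, ∀ v ∈ e, v ∈ S) ∧ M.card = k ∧
      (M : Set (Sym2 V)).Pairwise fun e f => ∀ v, v ∈ e → v ∉ f} := by
    classical
    refine ⟨G.edgeFinset.card, ?_⟩
    rintro k ⟨M', hM'1, _, hcard', _⟩
    rw [← hcard']
    refine Finset.card_le_card (fun e he => ?_)
    rw [SimpleGraph.mem_edgeFinset]
    exact hM'1 he
  have hle : M.card ≤ matchingNumberOn G S := le_csSup hb hmem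
  have h2m := card_supp_eq_two_mul hf
  rw [← hMdef] at h2m
  omega


end A7

section A8


lemma part1 {n r : ℕ} (G : SimpleGraph (Fin n)) (hfree : Free (bookGraph r) G)
    (u : Fin n) (A : Finset (Fin n)) (hA : ∀ v, v ∈ A ↔ G.Adj u v) :
    ∀ v ∈ A, degIn G A v ≤ r := by
  classical
  letI : DecidableRel G.Adj := Classical.decRel _
  intro v hv
  by_contra hcon
  push_neg at hcon
  rw [degIn_eq] at hcon
  have hle : r + 1 ≤ (A.filter (fun w => G.Adj v w)).card := hcon
  obtain ⟨T, hT, hTcard⟩ := Finset.exists_subset_card_eq hle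
  have hTprop : ∀ x ∈ T, x ∈ A ∧ G.Adj v x := by
    intro x hx
    exact Finset.mem_filter.mp (hT hx)
  set φ : Fin (r+1) → Fin n := fun i => (T.equivFin.symm (Fin.cast hTcard.symm i) : Fin n)
    with hφ
  have hφT : ∀ i, φ i ∈ T := fun i => (T.equivFin.symm (Fin.cast hTcard.symm i)).2
  have hφinj : Function.Injective φ := by
    intro i j hij
    have h1 : (T.equivFin.symm (Fin.cast hTcard.symm i)) =
        (T.equivFin.symm (Fin.cast hTcard.symm j)) := Subtype.ext hij
    have h2 := T.equivFin.symm.injective h1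
    have h3 : i.val = j.val := by simpa using congrArg Fin.val h2
    exact Fin.ext h3
  have huv : u ≠ v := fun h => G.loopless.irrefl u (h ▸ (hA v).mp hv)
  have hφu : ∀ i, φ i ≠ u := by
    intro i hc
    exact G.loopless.irrefl u ((hA u).mp (hc ▸ (hTprop _ (hφT i)).1))
  have hφv : ∀ i, φ i ≠ v := by
    intro i hc
    exact G.loopless.irrefl v (hc ▸ (hTprop _ (hφT i)).2)
  have hφAdju : ∀ i, G.Adj u (φ i) := fun i => (hA _).mp (hTprop _ (hφT i)).1
  have hφAdjv : ∀ i, G.Adj v (φ i) := fun i => (hTprop _ (hφT i)).2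
  set F : Fin (r+3) → Fin n := fun a =>
    if a.val = 0 then u else if a.val = 1 then v else φ ⟨a.val - 2, by omega⟩ with hF
  have hF0 : ∀ a : Fin (r+3), a.val = 0 → F a = u := by
    intro a ha; rw [hF]; simp [ha]
  have hF1 : ∀ a : Fin (r+3), a.val = 1 → F a = v := by
    intro a ha; rw [hF]; simp [ha]
  have hF2 : ∀ a : Fin (r+3), ∀ h : 2 ≤ a.val, F a = φ ⟨a.val - 2, by omega⟩ := by
    intro a ha; rw [hF]
    have h0 : ¬ a.val = 0 := by omega
    have h1 : ¬ a.val = 1 := by omega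
    simp [h0, h1]
  apply hfree
  have hadjmap : ∀ a b : Fin (r+3), (bookGraph r).Adj a b → G.Adj (F a) (F b) := by
    have hcore : ∀ a b : Fin (r+3), a ≠ b → a.val < 2 → G.Adj (F a) (F b) := by
      intro a b hab ha
      rcases (by omega : a.val = 0 ∨ a.val = 1) with ha0 | ha1
      · -- F a = u
        rw [hF0 a ha0]
        by_cases hb1 : b.val = 1
        · rw [hF1 b hb1]; exact (hA v).mp hv
        · by_cases hb0 : b.val = 0
          · exact absurd (Fin.ext (ha0.trans hb0.symm)) hab
          · rw [hF2 b (by omega)]; exact hφAdju _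
      · rw [hF1 a ha1]
        by_cases hb0 : b.val = 0
        · rw [hF0 b hb0]; exact ((hA v).mp hv).symm
        · by_cases hb1 : b.val = 1
          · exact absurd (Fin.ext (ha1.trans hb1.symm)) hab
          · rw [hF2 b (by omega)]; exact hφAdjv _
    intro a b hab
    rw [bookGraph, SimpleGraph.fromRel_adj] at hab
    obtain ⟨hne, h2⟩ := hab
    rcases h2 with h2 | h2
    · exact hcore a b hne h2
    · exact (hcore b a (Ne.symm hne) h2).symm
  have hvalinj : ∀ a b : Fin (r+3), F a = F b → a.val = b.val := by
    intro a b hab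
    rcases (by omega : a.val = 0 ∨ a.val = 1 ∨ 2 ≤ a.val) with ha | ha | ha <;>
      rcases (by omega : b.val = 0 ∨ b.val = 1 ∨ 2 ≤ b.val) with hb | hb | hb
    · omega
    · rw [hF0 a ha, hF1 b hb] at hab; exact absurd hab huv
    · rw [hF0 a ha, hF2 b hb] at hab; exact absurd hab.symm (hφu _)
    · rw [hF1 a ha, hF0 b hb] at hab; exact absurd hab.symm huv
    · omega
    · rw [hF1 a ha, hF2 b hb] at hab; exact absurd hab.symm (hφv _)
    · rw [hF2 a ha, hF0 b hb] at hab; exact absurd hab (hφu _)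
    · rw [hF2 a ha, hF1 b hb] at hab; exact absurd hab (hφv _)
    · rw [hF2 a ha, hF2 b hb] at hab
      have h2 := hφinj hab
      have h3 : a.val - 2 = b.val - 2 := congrArg Fin.val h2
      omega
  have hFinj : Function.Injective F := fun a b hab => Fin.ext (hvalinj a b hab)
  exact ⟨⟨F, fun {a b} hab => hadjmap a b hab⟩, hFinj⟩


end A8

end Bk


/-- In the extremal setup, every vertex of `A` has at most `r` neighbours in `A`, and
`e(A) ≤ ν(G*[A]) (r+1)`. -/
theorem degree_in_A_le (r n : ℕ) (hr : 1 ≤ r) (hn : 8 * (r ^ 2 + r + 4) ≤ n)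
    (G : SimpleGraph (Fin n)) (hconn : G.Connected) (hnonbip : ¬ G.Colorable 2)
    (hfree : Free (bookGraph r) G)
    (hmax : ∀ H : SimpleGraph (Fin n), ¬ H.Colorable 2 → Free (bookGraph r) H →
      specRad H ≤ specRad G)
    (x : Fin n → ℝ) (hxpos : ∀ v, 0 < x v) (hxunit : ∑ v, x v ^ 2 = 1)
    (heig : adjMat G *ᵥ x = specRad G • x)
    (u : Fin n) (hu : ∀ v, x v ≤ x u)
    (A B : Finset (Fin n)) (hA : ∀ v, v ∈ A ↔ G.Adj u v)
    (hB : ∀ v, v ∈ B ↔ v ≠ u ∧ v ∉ A) :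
    (∀ v ∈ A, degIn G A v ≤ r) ∧ edgesIn G A ≤ matchingNumberOn G A * (r + 1) := by
  classical
  letI : DecidableRel G.Adj := Classical.decRel _
  have hpart1 : ∀ v ∈ A, degIn G A v ≤ r := Bk.part1 G hfree u A hA
  refine ⟨hpart1, ?_⟩
  have hmain := Bk.main G r A.card A le_rfl hpart1
  have hconv := Bk.nu2_le_two_mul_matching G A
  have h2 : 2 * edgesIn G A ≤ 2 * (matchingNumberOn G A * (r+1)) := by
    calc 2 * edgesIn G A ≤ Bk.nu2 G A * (r+1) := hmain
      _ ≤ (2 * matchingNumberOn G A) * (r+1) := Nat.mul_le_mul_right _ hconv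
      _ = 2 * (matchingNumberOn G A * (r+1)) := by ring
  omega
end

section
/- In the extremal setup (r ≥ 1, n ≥ 8(r²+r+4), G* extremal, A = N(u*), B = V(G*) \ ({u*} ∪ A)): for every edge u₁u₂ of G* with both endpoints in A, d_B(u₁) + d_B(u₂) ≤ |B| + r − 1; and for every edge w₁w₂ of G* with both endpoints in B, d_A(w₁) + d_A(w₂) ≤ |A| + r. -/
open Finset Matrix

/-- Any set of common neighbours of an edge in a `B_{r+1}`-free graph has size at most `r`. -/
lemma book_common_le {r n : ℕ} {G : SimpleGraph (Fin n)} (hfree : Free (bookGraph r) G)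
    {a b : Fin n} (hab : G.Adj a b) (S : Finset (Fin n))
    (hS : ∀ c ∈ S, G.Adj a c ∧ G.Adj b c) : S.card ≤ r := by
  by_contra hcard
  push_neg at hcard
  obtain ⟨T, hTS, hT⟩ := Finset.exists_subset_card_eq (s := S) (n := r + 1) hcard
  let g : Fin (r + 1) → Fin n := fun i => ((T.equivFinOfCardEq hT).symm i : Fin n)
  have hginj : Function.Injective g := by
    intro i j h
    exact (T.equivFinOfCardEq hT).symm.injective (Subtype.ext h)
  have hg : ∀ i, G.Adj a (g i) ∧ G.Adj b (g i) := fun i =>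
    hS _ (hTS ((T.equivFinOfCardEq hT).symm i).2)
  apply hfree
  set F : Fin (r + 3) → Fin n := fun i => if i.val = 0 then a else if i.val = 1 then b
      else g ⟨i.val - 2, by have := i.isLt; omega⟩ with hF
  have hFrel : ∀ {u v : Fin (r + 3)}, (bookGraph r).Adj u v → G.Adj (F u) (F v) := by
    intro u v huv
    rw [bookGraph, SimpleGraph.fromRel_adj] at huv
    obtain ⟨hne, h2⟩ := huv
    have hne' : u.val ≠ v.val := fun h => hne (Fin.ext h)
    rw [hF]
    dsimp only
    split_ifs
    all_goals first
      | exact hab | exact hab.symm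
      | exact (hg _).1 | exact (hg _).2
      | exact (hg _).1.symm | exact (hg _).2.symm
      | (exfalso; omega)
  have hFinj : Function.Injective F := by
    intro u v h
    rw [hF] at h
    dsimp only at h
    split_ifs at h
    all_goals first
      | (exact Fin.ext (by omega))
      | (exact absurd h hab.ne)
      | (exact absurd h.symm hab.ne)
      | (exact absurd h (hg _).1.ne)
      | (exact absurd h (hg _).1.ne')
      | (exact absurd h (hg _).2.ne)
      | (exact absurd h (hg _).2.ne')
      | (refine Fin.ext ?_
         have h2 := hginj h
         rw [Fin.mk.injEq] at h2
         omega)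
  exact ⟨⟨F, hFrel⟩, hFinj⟩

lemma degIn_eq {V : Type*} (G : SimpleGraph V) [inst : DecidableRel G.Adj] (S : Finset V)
    (v : V) : degIn G S v = (S.filter fun w => G.Adj v w).card := by
  unfold degIn
  congr!

lemma degIn_add_degIn_le {V : Type*} [DecidableEq V] (G : SimpleGraph V) [DecidableRel G.Adj]
    (S : Finset V) (u₁ u₂ : V) (k : ℕ)
    (hk : (S.filter fun c => G.Adj u₁ c ∧ G.Adj u₂ c).card ≤ k) :
    degIn G S u₁ + degIn G S u₂ ≤ S.card + k := by
  rw [degIn_eq, degIn_eq]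
  have h := Finset.card_union_add_card_inter (S.filter fun w => G.Adj u₁ w)
    (S.filter fun w => G.Adj u₂ w)
  have hu : (S.filter (fun w => G.Adj u₁ w) ∪ S.filter fun w => G.Adj u₂ w) ⊆ S :=
    Finset.union_subset (Finset.filter_subset _ _) (Finset.filter_subset _ _)
  have hi : (S.filter (fun w => G.Adj u₁ w) ∩ S.filter fun w => G.Adj u₂ w)
      = S.filter fun c => G.Adj u₁ c ∧ G.Adj u₂ c := (Finset.filter_and _ _ _).symm
  rw [hi] at h
  have hc := Finset.card_le_card hu
  omega

/-- In the extremal setup: for every edge inside `A`,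
`d_B(u₁) + d_B(u₂) ≤ |B| + r − 1`, and for every edge inside `B`,
`d_A(w₁) + d_A(w₂) ≤ |A| + r`. -/
theorem degree_sums_on_edges (r n : ℕ) (hr : 1 ≤ r) (hn : 8 * (r ^ 2 + r + 4) ≤ n)
    (G : SimpleGraph (Fin n)) (hconn : G.Connected) (hnonbip : ¬ G.Colorable 2)
    (hfree : Free (bookGraph r) G)
    (hmax : ∀ H : SimpleGraph (Fin n), ¬ H.Colorable 2 → Free (bookGraph r) H →
      specRad H ≤ specRad G)
    (x : Fin n → ℝ) (hxpos : ∀ v, 0 < x v) (hxunit : ∑ v, x v ^ 2 = 1)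
    (heig : adjMat G *ᵥ x = specRad G • x)
    (u : Fin n) (hu : ∀ v, x v ≤ x u)
    (A B : Finset (Fin n)) (hA : ∀ v, v ∈ A ↔ G.Adj u v)
    (hB : ∀ v, v ∈ B ↔ v ≠ u ∧ v ∉ A) :
    (∀ u₁ u₂, u₁ ∈ A → u₂ ∈ A → G.Adj u₁ u₂ →
        degIn G B u₁ + degIn G B u₂ ≤ B.card + r - 1) ∧
      (∀ w₁ w₂, w₁ ∈ B → w₂ ∈ B → G.Adj w₁ w₂ →
        degIn G A w₁ + degIn G A w₂ ≤ A.card + r) := by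
  haveI : DecidableRel G.Adj := Classical.decRel _
  haveI : DecidableEq (Fin n) := instDecidableEqFin n
  constructor
  · intro u₁ u₂ h1 h2 hadj
    have huB : u ∉ B := fun h => ((hB u).mp h).1 rfl
    have hC : (B.filter fun c => G.Adj u₁ c ∧ G.Adj u₂ c).card ≤ r - 1 := by
      have hins : (insert u (B.filter fun c => G.Adj u₁ c ∧ G.Adj u₂ c)).card ≤ r := by
        apply book_common_le hfree hadj
        intro c hc
        rcases Finset.mem_insert.mp hc with rfl | hc
        · exact ⟨((hA u₁).mp h1).symm, ((hA u₂).mp h2).symm⟩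
        · exact (Finset.mem_filter.mp hc).2
      have hnot : u ∉ B.filter fun c => G.Adj u₁ c ∧ G.Adj u₂ c :=
        fun h => huB (Finset.mem_filter.mp h).1
      rw [Finset.card_insert_of_notMem hnot] at hins
      omega
    have hmain := degIn_add_degIn_le G B u₁ u₂ (r - 1) hC
    omega
  · intro w₁ w₂ h1 h2 hadj
    exact degIn_add_degIn_le G A w₁ w₂ r
      (book_common_le hfree hadj _ (fun c hc => (Finset.mem_filter.mp hc).2))
end

section
/- In the extremal setup (r ≥ 1, n ≥ 8(r²+r+4), G* extremal, A = N(u*), B = V(G*) \ ({u*} ∪ A), ρ = ρ(G*)): for every edge u₁u₂ of G* with both endpoints in A, the Perron vector entries satisfy x_{u₁} + x_{u₂} ≤ ((|B| + r + 1)/(ρ − r)) · x_{u*}. -/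
open Finset Matrix

lemma card_filter_val_lt (n m : ℕ) (h : m ≤ n) :
    #(univ.filter fun j : Fin n => j.val < m) = m := by
  rw [show (univ.filter fun j : Fin n => j.val < m) = univ.map (Fin.castLEEmb h) from ?_]
  · simp
  · ext j
    simp only [mem_filter, mem_univ, true_and, mem_map]
    constructor
    · intro hj
      exact ⟨⟨j.val, hj⟩, by simp [Fin.castLEEmb, Fin.ext_iff]⟩
    · rintro ⟨k, rfl⟩
      simp [Fin.castLEEmb]

lemma bddAbove_eigen {n : ℕ} (H : SimpleGraph (Fin n)) (hn : 0 < n) :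
    BddAbove {t : ℝ | ∃ v : Fin n → ℝ, v ≠ 0 ∧ adjMat H *ᵥ v = t • v} := by
  classical
  refine ⟨n, fun t ht => ?_⟩
  obtain ⟨v, hv0, hv⟩ := ht
  have : Nonempty (Fin n) := ⟨⟨0, hn⟩⟩
  obtain ⟨i, -, hi⟩ := Finset.exists_max_image univ (fun i => |v i|) univ_nonempty
  have hvipos : 0 < |v i| := by
    obtain ⟨j, hj⟩ := Function.ne_iff.mp hv0
    exact lt_of_lt_of_le (abs_pos.mpr hj) (hi j (mem_univ j))
  have key : |t| * |v i| ≤ (n : ℝ) * |v i| := by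
    have h1 : |t * v i| = |(adjMat H *ᵥ v) i| := by rw [hv]; simp [mul_comm]
    rw [← abs_mul, h1]
    calc |(adjMat H *ᵥ v) i| = |∑ j, adjMat H i j * v j| := by rfl
      _ ≤ ∑ j, |adjMat H i j * v j| := Finset.abs_sum_le_sum_abs _ _
      _ ≤ ∑ _j : Fin n, |v i| := by
          refine Finset.sum_le_sum fun j _ => ?_
          rw [abs_mul]
          have h2 : |adjMat H i j| ≤ 1 := by
            letI : DecidableRel H.Adj := Classical.decRel _
            show |H.adjMatrix ℝ i j| ≤ 1
            rw [SimpleGraph.adjMatrix_apply]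
            split <;> simp
          have h3 : |v j| ≤ |v i| := hi j (mem_univ j)
          calc |adjMat H i j| * |v j| ≤ 1 * |v i| :=
                mul_le_mul h2 h3 (abs_nonneg _) zero_le_one
            _ = |v i| := one_mul _
      _ = (n : ℝ) * |v i| := by rw [Finset.sum_const]; simp [nsmul_eq_mul]
  have := le_of_mul_le_mul_right key hvipos
  exact le_trans (le_abs_self t) this


/-- the clique on the first r+2 vertices of Fin n -/
def cliqueG (n r : ℕ) : SimpleGraph (Fin n) :=
  SimpleGraph.fromRel (fun a b => a.val < r + 2 ∧ b.val < r + 2)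

lemma cliqueG_adj {n r : ℕ} (a b : Fin n) :
    (cliqueG n r).Adj a b ↔ a ≠ b ∧ a.val < r + 2 ∧ b.val < r + 2 := by
  rw [cliqueG, SimpleGraph.fromRel_adj]
  tauto

lemma cliqueG_not_colorable (n r : ℕ) (hr : 1 ≤ r) (h : r + 2 ≤ n) :
    ¬ (cliqueG n r).Colorable 2 := by
  intro hc
  obtain ⟨c⟩ := hc
  have h3 : 3 ≤ n := by omega
  set p0 : Fin n := ⟨0, by omega⟩
  set p1 : Fin n := ⟨1, by omega⟩
  set p2 : Fin n := ⟨2, by omega⟩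
  have adj01 : (cliqueG n r).Adj p0 p1 := by
    rw [cliqueG_adj]
    exact ⟨by simp [p0, p1, Fin.ext_iff], show (0:ℕ) < r+2 by omega, show (1:ℕ) < r+2 by omega⟩
  have adj02 : (cliqueG n r).Adj p0 p2 := by
    rw [cliqueG_adj]
    exact ⟨by simp [p0, p2, Fin.ext_iff], show (0:ℕ) < r+2 by omega, show (2:ℕ) < r+2 by omega⟩
  have adj12 : (cliqueG n r).Adj p1 p2 := by
    rw [cliqueG_adj]
    exact ⟨by simp [p1, p2, Fin.ext_iff], show (1:ℕ) < r+2 by omega, show (2:ℕ) < r+2 by omega⟩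
  have e01 : (c p0).val ≠ (c p1).val := fun e => c.valid adj01 (Fin.ext e)
  have e02 : (c p0).val ≠ (c p2).val := fun e => c.valid adj02 (Fin.ext e)
  have e12 : (c p1).val ≠ (c p2).val := fun e => c.valid adj12 (Fin.ext e)
  have l0 : (c p0).val < 2 := (c p0).isLt
  have l1 : (c p1).val < 2 := (c p1).isLt
  have l2 : (c p2).val < 2 := (c p2).isLt
  omega

lemma cliqueG_free (n r : ℕ) (h : r + 2 ≤ n) : Free (bookGraph r) (cliqueG n r) := by
  classical
  rintro ⟨f, finj⟩
  -- all of 1..r+2 map to neighbors of f 0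
  have hadj : ∀ k : Fin (r + 3), k ≠ 0 → (cliqueG n r).Adj (f 0) (f k) := by
    intro k hk
    apply f.map_rel
    rw [bookGraph, SimpleGraph.fromRel_adj]
    exact ⟨(Ne.symm hk), Or.inl (by simp)⟩
  have hf0 : (f 0).val < r + 2 := by
    have := hadj 1 (by simp [Fin.ext_iff])
    rw [cliqueG_adj] at this
    exact this.2.1
  set T : Finset (Fin n) := (univ.filter fun w : Fin n => w.val < r + 2).erase (f 0) with hT
  have hsub : ∀ k ∈ (univ.erase (0 : Fin (r + 3))), f k ∈ T := by
    intro k hk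
    have hk0 : k ≠ 0 := (Finset.mem_erase.mp hk).1
    have := hadj k hk0
    rw [cliqueG_adj] at this
    exact Finset.mem_erase.mpr ⟨fun e => this.1 (e.symm), by simp [this.2.2]⟩
  have hcard : #(univ.erase (0 : Fin (r + 3))) ≤ #T :=
    Finset.card_le_card_of_injOn f hsub (finj.injOn)
  have hTcard : #T = r + 1 := by
    rw [hT, Finset.card_erase_of_mem (by simp [hf0]), card_filter_val_lt n (r+2) h]
    omega
  rw [hTcard, Finset.card_erase_of_mem (mem_univ _), Finset.card_univ, Fintype.card_fin] at hcard
  omega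

lemma cliqueG_spec (n r : ℕ) (h : r + 2 ≤ n) : (r : ℝ) + 1 ≤ specRad (cliqueG n r) := by
  classical
  have hn : 0 < n := by omega
  set v : Fin n → ℝ := fun i => if i.val < r + 2 then 1 else 0 with hv
  have hv0 : v ≠ 0 := by
    intro e
    have h02 : (0:ℕ) < r + 2 := by omega
    have := congrFun e ⟨0, hn⟩
    simp [hv, h02] at this
  have heig : adjMat (cliqueG n r) *ᵥ v = ((r : ℝ) + 1) • v := by
    letI : DecidableRel (cliqueG n r).Adj := Classical.decRel _
    funext i
    have hrw : (adjMat (cliqueG n r) *ᵥ v) i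
        = ∑ w ∈ (cliqueG n r).neighborFinset i, v w := by
      exact SimpleGraph.adjMatrix_mulVec_apply _ _ _
    rw [hrw, SimpleGraph.neighborFinset_eq_filter]
    by_cases hi : i.val < r + 2
    · have hset : (univ.filter fun w => (cliqueG n r).Adj i w)
          = (univ.filter fun j : Fin n => j.val < r + 2).erase i := by
        ext w
        simp only [mem_filter, mem_univ, true_and, Finset.mem_erase, cliqueG_adj]
        constructor
        · rintro ⟨hne, -, hw⟩; exact ⟨fun e => hne e.symm, hw⟩
        · rintro ⟨hne, hw⟩; exact ⟨fun e => hne e.symm, hi, hw⟩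
      rw [hset]
      have : ∑ w ∈ (univ.filter fun j : Fin n => j.val < r + 2).erase i, v w
          = ∑ w ∈ (univ.filter fun j : Fin n => j.val < r + 2).erase i, (1 : ℝ) := by
        apply Finset.sum_congr rfl
        intro w hw
        have := (Finset.mem_filter.mp (Finset.mem_of_mem_erase hw)).2
        simp [hv, this]
      rw [this, Finset.sum_const, Finset.card_erase_of_mem (by simp [hi]),
        card_filter_val_lt n (r+2) h]
      simp [hv, hi]
    · have hset : (univ.filter fun w => (cliqueG n r).Adj i w) = ∅ := by
        ext w
        simp only [mem_filter, mem_univ, true_and, Finset.notMem_empty, iff_false, cliqueG_adj]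
        rintro ⟨-, hi2, -⟩; exact hi hi2
      rw [hset]
      simp [hv, hi]
  calc (r : ℝ) + 1 ≤ sSup {t : ℝ | ∃ w : Fin n → ℝ, w ≠ 0 ∧ adjMat (cliqueG n r) *ᵥ w = t • w} :=
        le_csSup (bddAbove_eigen _ hn) ⟨v, hv0, heig⟩
    _ = specRad (cliqueG n r) := rfl


lemma pages_le {n r : ℕ} {G : SimpleGraph (Fin n)} [DecidableRel G.Adj]
    (hfree : Free (bookGraph r) G) {a b : Fin n} (hab : G.Adj a b) :
    #(univ.filter fun c => G.Adj a c ∧ G.Adj b c) ≤ r := by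
  classical
  by_contra hcon
  push_neg at hcon
  obtain ⟨s, hs_sub, hs_card⟩ := Finset.exists_subset_card_eq (hcon : r + 1 ≤ _)
  have hs_prop : ∀ c ∈ s, G.Adj a c ∧ G.Adj b c := fun c hc =>
    (Finset.mem_filter.mp (hs_sub hc)).2
  set e := s.orderIsoOfFin hs_card with he
  set g : Fin (r + 1) → Fin n := fun k => (e k : Fin n) with hg
  have ginj : Function.Injective g := fun k k' h =>
    e.injective (Subtype.ext h)
  have gs : ∀ k, g k ∈ s := fun k => (e k).2
  set F : Fin (r + 3) → Fin n := fun i =>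
    if i.val = 0 then a else if i.val = 1 then b else g ⟨i.val - 2, by omega⟩ with hF
  have hFcase : ∀ i : Fin (r + 3),
      (i.val = 0 ∧ F i = a) ∨ (i.val = 1 ∧ F i = b) ∨
      ∃ k : Fin (r + 1), i.val = k.val + 2 ∧ F i = g k := by
    intro i
    by_cases h0 : i.val = 0
    · exact Or.inl ⟨h0, by simp only [hF]; rw [if_pos h0]⟩
    by_cases h1 : i.val = 1
    · exact Or.inr (Or.inl ⟨h1, by simp only [hF]; rw [if_neg h0, if_pos h1]⟩)
    · exact Or.inr (Or.inr ⟨⟨i.val - 2, by omega⟩, by simp; omega, by simp only [hF]; rw [if_neg h0, if_neg h1]⟩)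
  have hane : ∀ k, a ≠ g k := fun k => (G.ne_of_adj (hs_prop _ (gs k)).1)
  have hbne : ∀ k, b ≠ g k := fun k => (G.ne_of_adj (hs_prop _ (gs k)).2)
  have hhom : ∀ {i j : Fin (r + 3)}, (bookGraph r).Adj i j → G.Adj (F i) (F j) := by
    intro i j hij
    rw [bookGraph, SimpleGraph.fromRel_adj] at hij
    obtain ⟨hne, hor⟩ := hij
    have hvne : i.val ≠ j.val := fun h => hne (Fin.ext h)
    rcases hFcase i with ⟨hi, hFi⟩ | ⟨hi, hFi⟩ | ⟨k, hi, hFi⟩ <;>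
      rcases hFcase j with ⟨hj, hFj⟩ | ⟨hj, hFj⟩ | ⟨k', hj, hFj⟩ <;>
      rw [hFi, hFj]
    · omega
    · exact hab
    · exact (hs_prop _ (gs k')).1
    · exact hab.symm
    · omega
    · exact (hs_prop _ (gs k')).2
    · exact ((hs_prop _ (gs k)).1).symm
    · exact ((hs_prop _ (gs k)).2).symm
    · omega
  have hinj : Function.Injective F := by
    intro i j hFij
    rcases hFcase i with ⟨hi, hFi⟩ | ⟨hi, hFi⟩ | ⟨k, hi, hFi⟩ <;>
      rcases hFcase j with ⟨hj, hFj⟩ | ⟨hj, hFj⟩ | ⟨k', hj, hFj⟩ <;>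
      rw [hFi, hFj] at hFij
    · exact Fin.ext (by omega)
    · exact absurd hFij (G.ne_of_adj hab)
    · exact absurd hFij (hane k')
    · exact absurd hFij.symm (G.ne_of_adj hab)
    · exact Fin.ext (by omega)
    · exact absurd hFij (hbne k')
    · exact absurd hFij.symm (hane k)
    · exact absurd hFij.symm (hbne k)
    · have := ginj hFij
      apply Fin.ext
      have : k.val = k'.val := congrArg Fin.val this
      omega
  exact hfree ⟨⟨F, hhom⟩, hinj⟩

/-- In the extremal setup: for every edge `u₁u₂` inside `A`,
`x_{u₁} + x_{u₂} ≤ ((|B| + r + 1)/(ρ − r)) x_{u*}`. -/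
theorem eigenvector_sum_on_edges_in_A (r n : ℕ) (hr : 1 ≤ r) (hn : 8 * (r ^ 2 + r + 4) ≤ n)
    (G : SimpleGraph (Fin n)) (hconn : G.Connected) (hnonbip : ¬ G.Colorable 2)
    (hfree : Free (bookGraph r) G)
    (hmax : ∀ H : SimpleGraph (Fin n), ¬ H.Colorable 2 → Free (bookGraph r) H →
      specRad H ≤ specRad G)
    (x : Fin n → ℝ) (hxpos : ∀ v, 0 < x v) (hxunit : ∑ v, x v ^ 2 = 1)
    (heig : adjMat G *ᵥ x = specRad G • x)
    (u : Fin n) (hu : ∀ v, x v ≤ x u)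
    (A B : Finset (Fin n)) (hA : ∀ v, v ∈ A ↔ G.Adj u v)
    (hB : ∀ v, v ∈ B ↔ v ≠ u ∧ v ∉ A) :
    ∀ u₁ u₂, u₁ ∈ A → u₂ ∈ A → G.Adj u₁ u₂ →
      x u₁ + x u₂ ≤ ((B.card : ℝ) + (r : ℝ) + 1) / (specRad G - (r : ℝ)) * x u := by
  letI : DecidableRel G.Adj := Classical.decRel _
  intro u₁ u₂ hu₁ hu₂ h12
  set ρ : ℝ := specRad G with hρdef
  -- ρ is at least r + 1
  have hrn : r + 2 ≤ n := by nlinarith [sq_nonneg r]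
  have hρr : (r : ℝ) + 1 ≤ ρ :=
    le_trans (cliqueG_spec n r hrn)
      (hmax _ (cliqueG_not_colorable n r hr hrn) (cliqueG_free n r hrn))
  have hρpos : (0:ℝ) < ρ - r := by linarith
  -- eigen-equation at each vertex
  have eig : ∀ v : Fin n, ∑ w ∈ univ.filter (fun w => G.Adj v w), x w = ρ * x v := by
    intro v
    have h1 : (adjMat G *ᵥ x) v = ρ * x v := by rw [heig]; simp
    have h2 : (adjMat G *ᵥ x) v = ∑ w ∈ G.neighborFinset v, x w := by
      have : adjMat G = G.adjMatrix ℝ := rfl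
      rw [this]
      exact SimpleGraph.adjMatrix_mulVec_apply _ _ _
    rw [← h1, h2, SimpleGraph.neighborFinset_eq_filter]
  -- basic structure of the partition
  have huA : u ∉ A := fun h => G.irrefl ((hA u).mp h)
  have huB : u ∉ B := fun h => ((hB u).mp h).1 rfl
  have hABdisj : Disjoint A B := by
    rw [Finset.disjoint_left]
    intro w hwA hwB
    exact ((hB w).mp hwB).2 hwA
  have hadj_u : ∀ v ∈ A, G.Adj v u := fun v hv => ((hA v).mp hv).symm
  -- splitting the eigen-equation for a vertex of A
  have split : ∀ v ∈ A, ρ * x v =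
      x u + (∑ w ∈ A.filter (fun w => G.Adj v w), x w)
          + (∑ w ∈ B.filter (fun w => G.Adj v w), x w) := by
    intro v hv
    rw [← eig v]
    have hset : univ.filter (fun w => G.Adj v w)
        = insert u ((A.filter fun w => G.Adj v w) ∪ (B.filter fun w => G.Adj v w)) := by
      ext w
      simp only [mem_filter, mem_univ, true_and, Finset.mem_insert, Finset.mem_union]
      constructor
      · intro hadj
        by_cases hwu : w = u
        · exact Or.inl hwu
        · by_cases hwA : w ∈ A
          · exact Or.inr (Or.inl ⟨hwA, hadj⟩)
          · exact Or.inr (Or.inr ⟨(hB w).mpr ⟨hwu, hwA⟩, hadj⟩)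
      · rintro (rfl | ⟨-, h⟩ | ⟨-, h⟩)
        · exact hadj_u v hv
        · exact h
        · exact h
    have hdisjf : Disjoint (A.filter fun w => G.Adj v w) (B.filter fun w => G.Adj v w) :=
      Finset.disjoint_filter_filter hABdisj
    have hnotmem : u ∉ (A.filter fun w => G.Adj v w) ∪ (B.filter fun w => G.Adj v w) := by
      simp only [Finset.mem_union, mem_filter]
      rintro (⟨h, -⟩ | ⟨h, -⟩)
      · exact huA h
      · exact huB h
    rw [hset, Finset.sum_insert hnotmem, Finset.sum_union hdisjf]
    ring
  -- choose the maximal A-edge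
  set P : Finset (Fin n × Fin n) := (A ×ˢ A).filter fun p => G.Adj p.1 p.2 with hP
  have hPmem : ∀ a b : Fin n, a ∈ A → b ∈ A → G.Adj a b → (a, b) ∈ P := by
    intro a b ha hb hab
    rw [hP, Finset.mem_filter, Finset.mem_product]
    exact ⟨⟨ha, hb⟩, hab⟩
  obtain ⟨⟨v₁, v₂⟩, hvP, hvmax⟩ :=
    Finset.exists_max_image P (fun p => x p.1 + x p.2) ⟨(u₁, u₂), hPmem _ _ hu₁ hu₂ h12⟩
  have hv₁ : v₁ ∈ A := (Finset.mem_product.mp (Finset.mem_filter.mp hvP).1).1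
  have hv₂ : v₂ ∈ A := (Finset.mem_product.mp (Finset.mem_filter.mp hvP).1).2
  have hv12 : G.Adj v₁ v₂ := (Finset.mem_filter.mp hvP).2
  -- bound the A-sums
  have boundA : ∀ a b : Fin n, a ∈ A → b ∈ A → G.Adj a b →
      (∀ p ∈ P, x p.1 + x p.2 ≤ x a + x b) →
      ∑ w ∈ A.filter (fun w => G.Adj a w), x w ≤ (r : ℝ) * x b := by
    intro a b ha hb hab hmaxab
    have hterm : ∀ w ∈ A.filter (fun w => G.Adj a w), x w ≤ x b := by
      intro w hw
      obtain ⟨hwA, hwadj⟩ := Finset.mem_filter.mp hw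
      have := hmaxab (a, w) (hPmem _ _ ha hwA hwadj)
      simpa using this
    have hcard : #(A.filter fun w => G.Adj a w) ≤ r := by
      have hsub : (A.filter fun w => G.Adj a w)
          ⊆ univ.filter fun c => G.Adj u c ∧ G.Adj a c := by
        intro w hw
        obtain ⟨hwA, hwadj⟩ := Finset.mem_filter.mp hw
        exact Finset.mem_filter.mpr ⟨mem_univ _, (hA w).mp hwA, hwadj⟩
      exact le_trans (Finset.card_le_card hsub) (pages_le hfree ((hA a).mp ha))
    calc ∑ w ∈ A.filter (fun w => G.Adj a w), x w
        ≤ #(A.filter fun w => G.Adj a w) • x b := Finset.sum_le_card_nsmul _ _ _ hterm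
      _ = (#(A.filter fun w => G.Adj a w) : ℝ) * x b := nsmul_eq_mul _ _
      _ ≤ (r : ℝ) * x b := by
          apply mul_le_mul_of_nonneg_right _ (le_of_lt (hxpos b))
          exact_mod_cast hcard
  have hmax12 : ∀ p ∈ P, x p.1 + x p.2 ≤ x v₁ + x v₂ := hvmax
  have hmax21 : ∀ p ∈ P, x p.1 + x p.2 ≤ x v₂ + x v₁ := by
    intro p hp; linarith [hvmax p hp]
  have bA1 := boundA v₁ v₂ hv₁ hv₂ hv12 hmax12
  have bA2 := boundA v₂ v₁ hv₂ hv₁ hv12.symm hmax21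
  -- bound the B-sums
  have boundB :
      (∑ w ∈ B.filter (fun w => G.Adj v₁ w), x w)
        + (∑ w ∈ B.filter (fun w => G.Adj v₂ w), x w)
      ≤ ((B.card : ℝ) + (r : ℝ) - 1) * x u := by
    set s := B.filter (fun w => G.Adj v₁ w) with hs
    set t := B.filter (fun w => G.Adj v₂ w) with ht
    have key : ∑ w ∈ s ∪ t, x w + ∑ w ∈ s ∩ t, x w = ∑ w ∈ s, x w + ∑ w ∈ t, x w :=
      Finset.sum_union_inter
    have hsub1 : s ∪ t ⊆ B := by
      rw [hs, ht]
      exact Finset.union_subset (Finset.filter_subset _ _) (Finset.filter_subset _ _)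
    have b1 : ∑ w ∈ s ∪ t, x w ≤ (B.card : ℝ) * x u := by
      calc ∑ w ∈ s ∪ t, x w ≤ #(s ∪ t) • x u :=
            Finset.sum_le_card_nsmul _ _ _ (fun w _ => hu w)
        _ = (#(s ∪ t) : ℝ) * x u := nsmul_eq_mul _ _
        _ ≤ (B.card : ℝ) * x u := by
            apply mul_le_mul_of_nonneg_right _ (le_of_lt (hxpos u))
            exact_mod_cast Finset.card_le_card hsub1
    have hcard2 : (#(s ∩ t) : ℝ) ≤ (r : ℝ) - 1 := by
      have hstep : insert u (s ∩ t) ⊆ univ.filter fun c => G.Adj v₁ c ∧ G.Adj v₂ c := by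
        intro w hw
        rcases Finset.mem_insert.mp hw with rfl | hw
        · exact Finset.mem_filter.mpr ⟨mem_univ _, hadj_u v₁ hv₁, hadj_u v₂ hv₂⟩
        · obtain ⟨hws, hwt⟩ := Finset.mem_inter.mp hw
          exact Finset.mem_filter.mpr ⟨mem_univ _,
            (Finset.mem_filter.mp hws).2, (Finset.mem_filter.mp hwt).2⟩
      have hucard : #(insert u (s ∩ t)) = #(s ∩ t) + 1 := by
        rw [Finset.card_insert_of_notMem]
        intro hmem
        exact huB (Finset.mem_filter.mp (Finset.mem_inter.mp hmem).1).1
      have := le_trans (Finset.card_le_card hstep) (pages_le hfree hv12)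
      rw [hucard] at this
      have hnat : #(s ∩ t) + 1 ≤ r := this
      have : (#(s ∩ t) : ℝ) + 1 ≤ (r : ℝ) := by exact_mod_cast hnat
      linarith
    have b2 : ∑ w ∈ s ∩ t, x w ≤ ((r : ℝ) - 1) * x u := by
      calc ∑ w ∈ s ∩ t, x w ≤ #(s ∩ t) • x u :=
            Finset.sum_le_card_nsmul _ _ _ (fun w _ => hu w)
        _ = (#(s ∩ t) : ℝ) * x u := nsmul_eq_mul _ _
        _ ≤ ((r : ℝ) - 1) * x u := mul_le_mul_of_nonneg_right hcard2 (le_of_lt (hxpos u))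
    have : ∑ w ∈ s, x w + ∑ w ∈ t, x w ≤ (B.card : ℝ) * x u + ((r:ℝ)-1) * x u := by
      rw [← key]; linarith
    linarith [this]
  -- assemble
  have main : (ρ - r) * (x v₁ + x v₂) ≤ ((B.card : ℝ) + r + 1) * x u := by
    have e1 := split v₁ hv₁
    have e2 := split v₂ hv₂
    nlinarith [bA1, bA2, boundB, hxpos u]
  have hfinal : (x u₁ + x u₂) * (ρ - r) ≤ ((B.card : ℝ) + r + 1) * x u := by
    have h1 : x u₁ + x u₂ ≤ x v₁ + x v₂ := by
      simpa using hvmax (u₁, u₂) (hPmem _ _ hu₁ hu₂ h12)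
    calc (x u₁ + x u₂) * (ρ - r) ≤ (x v₁ + x v₂) * (ρ - r) :=
          mul_le_mul_of_nonneg_right h1 (le_of_lt hρpos)
      _ = (ρ - r) * (x v₁ + x v₂) := mul_comm _ _
      _ ≤ _ := main
  rw [div_mul_eq_mul_div, le_div_iff₀ hρpos]
  exact hfinal
end

section
/- In the extremal setup (r ≥ 1, n ≥ 8(r²+r+4), G* extremal, A = N(u*), B = V(G*) \ ({u*} ∪ A)), the number of non-edges between A and B satisfies ē(A,B) ≥ ν(G*[A]) · (|B| − r + 1), where ē(A,B) = |A||B| − e(A,B), e(A,B) is the number of edges of G* with one endpoint in A and one in B, and ν(G*[A]) is the matching number of the subgraph of G* induced by A. -/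
open Finset Matrix

open Finset in
private lemma common_le {r n : ℕ} {G : SimpleGraph (Fin n)}
    (hfree : Free (bookGraph r) G)
    {a b : Fin n} (hab : G.Adj a b) :
    letI : DecidableRel G.Adj := Classical.decRel _
    (Finset.univ.filter fun v => G.Adj a v ∧ G.Adj b v).card ≤ r := by
  classical
  by_contra h
  push_neg at h
  obtain ⟨T, hT, hTcard⟩ := Finset.exists_subset_card_eq (show r + 1 ≤ _ from h)
  set g : Fin (r+1) → Fin n := fun i => (T.orderIsoOfFin hTcard i : Fin n) with hg
  have hginj : Function.Injective g := fun i j hij => by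
    exact (T.orderIsoOfFin hTcard).injective (Subtype.ext hij)
  have hgadj : ∀ i, G.Adj a (g i) ∧ G.Adj b (g i) := fun i => by
    have := hT (T.orderIsoOfFin hTcard i).2
    exact (Finset.mem_filter.mp this).2
  have hga : ∀ i, g i ≠ a := fun i hia => by
    have := (hgadj i).1; rw [hia] at this; exact G.loopless.irrefl a this
  have hgb : ∀ i, g i ≠ b := fun i hib => by
    have := (hgadj i).2; rw [hib] at this; exact G.loopless.irrefl b this
  set f : Fin (r+3) → Fin n := fun i =>
    if i.val = 0 then a else if i.val = 1 then b else g ⟨i.val - 2, by omega⟩ with hf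
  have hmap : ∀ ⦃p q : Fin (r+3)⦄,
      (bookGraph r).Adj p q → G.Adj (f p) (f q) := by
    intro p q hpq
    simp only [bookGraph, SimpleGraph.fromRel_adj] at hpq
    obtain ⟨hne, h2⟩ := hpq
    have hne' : p.val ≠ q.val := fun hh => hne (Fin.ext hh)
    by_cases hp0 : p.val = 0 <;> by_cases hp1 : p.val = 1 <;>
      by_cases hq0 : q.val = 0 <;> by_cases hq1 : q.val = 1 <;>
      simp only [hf, hp0, hp1, hq0, hq1, if_true, if_false, eq_self_iff_true, if_pos, if_neg] <;>
      first
      | exact hab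
      | exact hab.symm
      | exact (hgadj _).1
      | exact (hgadj _).2
      | exact ((hgadj _).1).symm
      | exact ((hgadj _).2).symm
      | (exfalso; omega)
  have hinj : Function.Injective f := by
    intro p q hpq
    by_cases hp0 : p.val = 0 <;> by_cases hp1 : p.val = 1 <;>
      by_cases hq0 : q.val = 0 <;> by_cases hq1 : q.val = 1 <;>
      simp only [hf, hp0, hp1, hq0, hq1, if_true, if_false, eq_self_iff_true, if_pos, if_neg] at hpq <;>
      first
      | (exact Fin.ext (by omega))
      | (exact absurd hpq hab.ne)
      | (exact absurd hpq hab.symm.ne)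
      | (exact absurd hpq.symm (hga _))
      | (exact absurd hpq.symm (hgb _))
      | (exact absurd hpq (hga _))
      | (exact absurd hpq (hgb _))
      | (refine Fin.ext ?_;
         have h3 : p.val - 2 = q.val - 2 := congrArg Fin.val (hginj hpq); omega)
  exact hfree ⟨⟨f, @hmap⟩, hinj⟩

open Finset in
private lemma aux_sum {n : ℕ} (G : SimpleGraph (Fin n)) (c : ℤ) (g : Fin n → ℤ) (A0 : Finset (Fin n))
    (hc : ∀ a b : Fin n, G.Adj a b → a ∈ A0 → b ∈ A0 → c ≤ g a + g b) :
    ∀ M : Finset (Sym2 (Fin n)), ∀ A' : Finset (Fin n), A' ⊆ A0 →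
      ↑M ⊆ G.edgeSet →
      (∀ e ∈ M, ∀ v ∈ e, v ∈ A') →
      ((M : Set (Sym2 (Fin n))).Pairwise fun e f => ∀ v, v ∈ e → v ∉ f) →
      (∀ v ∈ A', 0 ≤ g v) →
      (M.card : ℤ) * c ≤ ∑ v ∈ A', g v := by
  classical
  intro M
  induction M using Finset.induction_on with
  | empty =>
    intro A' _ _ _ _ hg
    simpa using Finset.sum_nonneg hg
  | @insert e M he ih =>
    intro A' hA0 hsub hin hpair hg
    induction e using Sym2.inductionOn with
    | hf a b =>
    have hedge : G.Adj a b := by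
      have : s(a, b) ∈ G.edgeSet := hsub (by simp)
      rwa [SimpleGraph.mem_edgeSet] at this
    have haA : a ∈ A' := hin _ (Finset.mem_insert_self _ _) a (Sym2.mem_mk_left a b)
    have hbA : b ∈ A' := hin _ (Finset.mem_insert_self _ _) b (Sym2.mem_mk_right a b)
    have hne : a ≠ b := hedge.ne
    have hpairsub : ({a, b} : Finset (Fin n)) ⊆ A' := by
      intro v hv
      rcases Finset.mem_insert.mp hv with rfl | hv
      · exact haA
      · rw [Finset.mem_singleton.mp hv]; exact hbA
    have hsum : ∑ v ∈ A', g v = ∑ v ∈ A' \ {a, b}, g v + (g a + g b) := by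
      rw [← Finset.sum_sdiff hpairsub, Finset.sum_pair hne]
    have hM' : (M.card : ℤ) * c ≤ ∑ v ∈ A' \ {a, b}, g v := by
      refine ih (A' \ {a, b}) (Finset.sdiff_subset.trans hA0) ?_ ?_ ?_ ?_
      · intro e' he'
        refine hsub ?_
        simp only [Finset.coe_insert, Set.mem_insert_iff]
        exact Or.inr he'
      · intro e' he' v hv
        refine Finset.mem_sdiff.mpr ⟨hin e' (Finset.mem_insert_of_mem he') v hv, ?_⟩
        intro hvab
        have hdis := hpair (x := s(a, b)) (y := e') (by simp) (by simp [he'])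
          (fun h => he (h ▸ he'))
        rcases Finset.mem_insert.mp hvab with rfl | hvb
        · exact hdis v (Sym2.mem_mk_left _ _) hv
        · rw [Finset.mem_singleton.mp hvb] at hv
          exact hdis b (Sym2.mem_mk_right _ _) hv
      · exact hpair.mono (by simp only [Finset.coe_insert]; exact Set.subset_insert _ _)
      · intro v hv
        exact hg v (Finset.mem_sdiff.mp hv).1
    have hcard : ((insert s(a, b) M).card : ℤ) = (M.card : ℤ) + 1 := by
      rw [Finset.card_insert_of_notMem he]
      push_cast
      ring
    have hcab := hc a b hedge (hA0 haA) (hA0 hbA)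
    rw [hcard, hsum]
    nlinarith [hM', hcab]

/-- In the extremal setup, the number of non-edges between `A` and `B` satisfies
`ē(A,B) ≥ ν(G*[A]) (|B| − r + 1)`. -/
theorem nonedges_lower (r n : ℕ) (hr : 1 ≤ r) (hn : 8 * (r ^ 2 + r + 4) ≤ n)
    (G : SimpleGraph (Fin n)) (hconn : G.Connected) (hnonbip : ¬ G.Colorable 2)
    (hfree : Free (bookGraph r) G)
    (hmax : ∀ H : SimpleGraph (Fin n), ¬ H.Colorable 2 → Free (bookGraph r) H →
      specRad H ≤ specRad G)
    (x : Fin n → ℝ) (hxpos : ∀ v, 0 < x v) (hxunit : ∑ v, x v ^ 2 = 1)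
    (heig : adjMat G *ᵥ x = specRad G • x)
    (u : Fin n) (hu : ∀ v, x v ≤ x u)
    (A B : Finset (Fin n)) (hA : ∀ v, v ∈ A ↔ G.Adj u v)
    (hB : ∀ v, v ∈ B ↔ v ≠ u ∧ v ∉ A) :
    (matchingNumberOn G A : ℤ) * ((B.card : ℤ) - (r : ℤ) + 1) ≤
      (A.card : ℤ) * (B.card : ℤ) - (edgesBetween G A B : ℤ) := by
    classical
  -- edge-degree into B
  have hd2 : ∀ a b : Fin n, G.Adj a b → a ∈ A → b ∈ A →
      ((B.filter fun w => G.Adj a w).card : ℤ) + ((B.filter fun w => G.Adj b w).card : ℤ) ≤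
        (B.card : ℤ) + (r : ℤ) - 1 := by
    intro a b hab haA hbA
    have hcommon := common_le hfree hab
    set X := B.filter (fun w => G.Adj a w) with hX
    set Y := B.filter (fun w => G.Adj b w) with hY
    have hu_mem : u ∈ Finset.univ.filter fun v => G.Adj a v ∧ G.Adj b v := by
      simp only [Finset.mem_filter, Finset.mem_univ, true_and]
      exact ⟨((hA a).mp haA).symm, ((hA b).mp hbA).symm⟩
    have hXY : X ∩ Y ⊆ (Finset.univ.filter fun v => G.Adj a v ∧ G.Adj b v).erase u := by
      intro v hv
      have hvX := (Finset.mem_inter.mp hv).1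
      have hvY := (Finset.mem_inter.mp hv).2
      have hvB := (Finset.mem_filter.mp hvX).1
      have hva := (Finset.mem_filter.mp hvX).2
      have hvb := (Finset.mem_filter.mp hvY).2
      refine Finset.mem_erase.mpr ⟨((hB v).mp hvB).1, ?_⟩
      simp only [Finset.mem_filter, Finset.mem_univ, true_and]
      exact ⟨hva, hvb⟩
    have h1 : (X ∩ Y).card ≤ r - 1 := by
      refine le_trans (Finset.card_le_card hXY) ?_
      rw [Finset.card_erase_of_mem hu_mem]
      omega
    have h2 : (X ∪ Y).card ≤ B.card := by
      refine Finset.card_le_card ?_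
      exact Finset.union_subset (Finset.filter_subset _ _) (Finset.filter_subset _ _)
    have h3 := Finset.card_union_add_card_inter X Y
    omega
  -- extract a maximum matching
  have hmem : matchingNumberOn G A ∈ {k | ∃ M : Finset (Sym2 (Fin n)), ↑M ⊆ G.edgeSet ∧
      (∀ e ∈ M, ∀ v ∈ e, v ∈ A) ∧ M.card = k ∧
      (M : Set (Sym2 (Fin n))).Pairwise fun e f => ∀ v, v ∈ e → v ∉ f} := by
    refine Nat.sSup_mem ⟨0, ∅, by simp, by simp, by simp, by simp⟩ ?_
    refine ⟨G.edgeFinset.card, ?_⟩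
    rintro k ⟨M, hM1, _, hM3, _⟩
    rw [← hM3]
    exact Finset.card_le_card fun e heM => SimpleGraph.mem_edgeFinset.mpr (hM1 heM)
  obtain ⟨M, hM1, hM2, hM3, hM4⟩ := hmem
  -- main inequality
  have hg : ∀ v ∈ A, (0:ℤ) ≤ (B.card : ℤ) - ((B.filter fun w => G.Adj v w).card : ℤ) := by
    intro v _
    have := Finset.card_le_card (Finset.filter_subset (fun w => G.Adj v w) B)
    omega
  have hc : ∀ a b : Fin n, G.Adj a b → a ∈ A → b ∈ A →
      (B.card : ℤ) - (r : ℤ) + 1 ≤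
        ((B.card : ℤ) - ((B.filter fun w => G.Adj a w).card : ℤ)) +
        ((B.card : ℤ) - ((B.filter fun w => G.Adj b w).card : ℤ)) := by
    intro a b hab haA hbA
    have := hd2 a b hab haA hbA
    linarith
  have key := aux_sum G ((B.card : ℤ) - (r : ℤ) + 1)
    (fun v => (B.card : ℤ) - ((B.filter fun w => G.Adj v w).card : ℤ)) A hc M A
    (Finset.Subset.refl A) hM1 hM2 hM4 hg
  rw [hM3] at key
  -- rewrite the sum
  have hEB : (edgesBetween G A B : ℤ) = ∑ a ∈ A, ((B.filter fun w => G.Adj a w).card : ℤ) := by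
    have : edgesBetween G A B = ∑ a ∈ A, (B.filter fun w => G.Adj a w).card := by
      unfold edgesBetween
      rw [Finset.card_filter, Finset.sum_product]
      refine Finset.sum_congr rfl fun a _ => ?_
      rw [Finset.card_filter]
    rw [this]
    push_cast
    rfl
  have hsum : ∑ v ∈ A, ((B.card : ℤ) - ((B.filter fun w => G.Adj v w).card : ℤ)) =
      (A.card : ℤ) * (B.card : ℤ) - (edgesBetween G A B : ℤ) := by
    rw [Finset.sum_sub_distrib, Finset.sum_const, nsmul_eq_mul, hEB]
  rw [hsum] at key
  exact key
end

section
/- In the extremal setup (r ≥ 1, n ≥ 8(r²+r+4), G* extremal, A = N(u*)), the matching number of the subgraph of G* induced by A satisfies ν(G*[A]) ≤ 1. -/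
open Finset Matrix

noncomputable section

lemma adjMat_apply {V : Type*} (G : SimpleGraph V) [DecidableRel G.Adj] (i j : V) :
    adjMat G i j = if G.Adj i j then 1 else 0 := by
  classical
  unfold adjMat
  rw [SimpleGraph.adjMatrix_apply]
  congr 1

lemma adjMat_nonneg {V : Type*} (G : SimpleGraph V) (i j : V) : 0 ≤ adjMat G i j := by
  classical rw [adjMat_apply]; split <;> norm_num

lemma adjMat_le_one {V : Type*} (G : SimpleGraph V) (i j : V) : adjMat G i j ≤ 1 := by
  classical rw [adjMat_apply]; split <;> norm_num

lemma adjMat_isHermitian {V : Type*} [Fintype V] [DecidableEq V] (G : SimpleGraph V) :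
    (adjMat G).IsHermitian := by
  classical
  unfold Matrix.IsHermitian
  ext i j
  simp [adjMat_apply, SimpleGraph.adj_comm]

-- eigenvalue bound
lemma eig_bound {n : ℕ} (G : SimpleGraph (Fin n)) {t : ℝ} {v : Fin n → ℝ} (hv : v ≠ 0)
    (h : adjMat G *ᵥ v = t • v) : t ≤ n := by
  classical
  -- pick coordinate with max |v|
  have hne : (Finset.univ : Finset (Fin n)).Nonempty := by
    rcases Function.ne_iff.1 hv with ⟨i, hi⟩
    exact ⟨i, mem_univ i⟩
  obtain ⟨i, -, hi⟩ := Finset.exists_max_image Finset.univ (fun i => |v i|) hne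
  have hvi : 0 < |v i| := by
    rcases Function.ne_iff.1 hv with ⟨j, hj⟩
    have := hi j (mem_univ j)
    have : 0 < |v j| := abs_pos.2 hj
    linarith [hi j (mem_univ j)]
  have h1 : t * v i = ∑ j, adjMat G i j * v j := by
    have := congrFun h i
    simp [Matrix.mulVec, dotProduct] at this
    linarith [this]
  have h2 : |t| * |v i| ≤ n * |v i| := by
    rw [← abs_mul, h1]
    calc |∑ j, adjMat G i j * v j| ≤ ∑ j, |adjMat G i j * v j| := Finset.abs_sum_le_sum_abs _ _
    _ ≤ ∑ _j : Fin n, |v i| := by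
        apply Finset.sum_le_sum
        intro j _
        rw [abs_mul]
        calc |adjMat G i j| * |v j| ≤ 1 * |v i| := by
              apply mul_le_mul
              · rw [abs_of_nonneg (adjMat_nonneg G i j)]; exact adjMat_le_one G i j
              · exact hi j (mem_univ j)
              · positivity
              · norm_num
        _ = |v i| := one_mul _
    _ = n * |v i| := by simp [mul_comm]
  nlinarith [le_abs_self t]

lemma specRad_bddAbove {n : ℕ} (G : SimpleGraph (Fin n)) :
    BddAbove {t : ℝ | ∃ v : Fin n → ℝ, v ≠ 0 ∧ adjMat G *ᵥ v = t • v} := by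
  refine ⟨n, ?_⟩
  rintro t ⟨v, hv, hvt⟩
  exact eig_bound G hv hvt

lemma specRad_ge_rayleigh {n : ℕ} (hn : 0 < n) (G : SimpleGraph (Fin n)) (y : Fin n → ℝ)
    (hy : y ≠ 0) :
    (∑ i, ∑ j, adjMat G i j * (y i * y j)) / (∑ i, y i ^ 2) ≤ specRad G := by
  classical
  haveI : Nonempty (Fin n) := ⟨⟨0, hn⟩⟩
  haveI : Nontrivial (EuclideanSpace ℝ (Fin n)) := by
    refine ⟨(WithLp.equiv 2 _).symm 0, (WithLp.equiv 2 _).symm 1, ?_⟩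
    intro h
    have := (WithLp.equiv 2 (Fin n → ℝ)).symm.injective h
    have := congrFun this ⟨0, hn⟩
    norm_num at this
  set M := adjMat G with hM
  have hsym : (Matrix.toEuclideanLin M).IsSymmetric :=
    (Matrix.isHermitian_iff_isSymmetric).1 (adjMat_isHermitian G)
  set T := Matrix.toEuclideanLin M with hT
  -- basic facts about the Rayleigh quotient
  have hQle : ∀ x : EuclideanSpace ℝ (Fin n), x ≠ 0 →
      RCLike.re (inner ℝ (T x) x : ℝ) / ‖x‖ ^ 2 ≤ (n : ℝ) := by
    intro x hx
    have hnorm : ‖x‖ ^ 2 = ∑ i, x i ^ 2 := by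
      rw [EuclideanSpace.norm_eq, Real.sq_sqrt (by positivity)]
      simp [sq_abs]
    have hinner : (inner ℝ (T x) x : ℝ) = ∑ i, (M *ᵥ (WithLp.equiv 2 _ x)) i * x i := by
      rw [PiLp.inner_apply]
      simp [Matrix.toEuclideanLin_apply]
      exact Finset.sum_congr rfl fun i _ => mul_comm _ _
    have hb : (inner ℝ (T x) x : ℝ) ≤ (n : ℝ) * ∑ i, x i ^ 2 := by
      rw [hinner]
      have h1 : ∀ i, (M *ᵥ (WithLp.equiv 2 _ x)) i * x i ≤ ∑ j, |x j| * |x i| := by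
        intro i
        calc (M *ᵥ (WithLp.equiv 2 _ x)) i * x i ≤ |(M *ᵥ (WithLp.equiv 2 _ x)) i * x i| :=
              le_abs_self _
        _ = |∑ j, M i j * x j| * |x i| := by rw [abs_mul]; rfl
        _ ≤ (∑ j, |M i j * x j|) * |x i| := by
              apply mul_le_mul_of_nonneg_right (Finset.abs_sum_le_sum_abs _ _) (abs_nonneg _)
        _ ≤ (∑ j, |x j|) * |x i| := by
              apply mul_le_mul_of_nonneg_right _ (abs_nonneg _)
              apply Finset.sum_le_sum
              intro j _
              rw [abs_mul, abs_of_nonneg (adjMat_nonneg G i j)]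
              calc M i j * |x j| ≤ 1 * |x j| :=
                    mul_le_mul_of_nonneg_right (adjMat_le_one G i j) (abs_nonneg _)
              _ = |x j| := one_mul _
        _ = ∑ j, |x j| * |x i| := by rw [Finset.sum_mul]
      calc (∑ i, (M *ᵥ (WithLp.equiv 2 _ x)) i * x i) ≤ ∑ i, ∑ j, |x j| * |x i| :=
            Finset.sum_le_sum fun i _ => h1 i
      _ = (∑ i, |x i|) ^ 2 := by
            rw [sq, Finset.sum_mul]
            congr 1
            ext i
            rw [Finset.mul_sum]
            congr 1
            ext j
            ring
      _ ≤ (Finset.univ.card : ℝ) * (∑ i, |x i| ^ 2) := by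
            exact_mod_cast sq_sum_le_card_mul_sum_sq (s := Finset.univ) (f := fun i => |x i|)
      _ = (n : ℝ) * ∑ i, x i ^ 2 := by simp [sq_abs]
    have hxn : ‖x‖ ≠ 0 := norm_ne_zero_iff.2 hx
    have hpos : (0:ℝ) < ‖x‖ ^ 2 := by positivity
    rw [div_le_iff₀ hpos, hnorm]
    simpa using hb
  set μ : ℝ := ⨆ x : { x : EuclideanSpace ℝ (Fin n) // x ≠ 0 },
      RCLike.re (inner ℝ (T x) x : ℝ) / ‖(x : EuclideanSpace ℝ (Fin n))‖ ^ 2 with hμdef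
  have heig : Module.End.HasEigenvalue T μ := by
    simpa [hμdef] using hsym.hasEigenvalue_iSup_of_finiteDimensional
  obtain ⟨v, hv⟩ := heig.exists_hasEigenvector
  have hv0 : v ≠ 0 := hv.right
  have hveq : T v = μ • v := hv.apply_eq_smul
  -- μ is in the spectral set
  have hμmem : μ ∈ {t : ℝ | ∃ w : Fin n → ℝ, w ≠ 0 ∧ adjMat G *ᵥ w = t • w} := by
    refine ⟨WithLp.equiv 2 _ v, ?_, ?_⟩
    · intro h
      apply hv0
      exact (WithLp.equiv 2 (Fin n → ℝ)).injective (by simpa using h)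
    · have := congrArg (WithLp.equiv 2 (Fin n → ℝ)) hveq
      change adjMat G *ᵥ (WithLp.equiv 2 _ v) = WithLp.equiv 2 _ (μ • v) at this
      rw [this]
      rfl
  have hμle : μ ≤ specRad G := le_csSup (specRad_bddAbove G) hμmem
  -- the Rayleigh quotient of y is at most μ
  set y' : EuclideanSpace ℝ (Fin n) := (WithLp.equiv 2 _).symm y with hy'def
  have hy' : y' ≠ 0 := by
    intro h
    exact hy ((WithLp.equiv 2 (Fin n → ℝ)).symm.injective (by simpa [hy'def] using h))
  have hQy : RCLike.re (inner ℝ (T y') y' : ℝ) / ‖y'‖ ^ 2 ≤ μ := by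
    have hbdd : BddAbove (Set.range fun x : { x : EuclideanSpace ℝ (Fin n) // x ≠ 0 } =>
        RCLike.re (inner ℝ (T x) x : ℝ) / ‖(x : EuclideanSpace ℝ (Fin n))‖ ^ 2) := by
      refine ⟨(n : ℝ), ?_⟩
      rintro t ⟨x, rfl⟩
      exact hQle x x.prop
    exact le_ciSup hbdd (⟨y', hy'⟩ : { x : EuclideanSpace ℝ (Fin n) // x ≠ 0 })
  -- identify the Rayleigh quotient of y' with the LHS
  have hnorm : ‖y'‖ ^ 2 = ∑ i, y i ^ 2 := by
    rw [EuclideanSpace.norm_eq, Real.sq_sqrt (by positivity)]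
    simp [hy'def, sq_abs]
  have hinner : (inner ℝ (T y') y' : ℝ) = ∑ i, ∑ j, M i j * (y i * y j) := by
    rw [PiLp.inner_apply]
    have : ∀ i, (T y') i = ∑ j, M i j * y j := by
      intro i
      rfl
    calc (∑ i, (inner ℝ ((T y') i) (y' i) : ℝ)) = ∑ i, (∑ j, M i j * y j) * y i := by
          refine Finset.sum_congr rfl fun i _ => ?_
          rw [RCLike.inner_apply, starRingEnd_apply, star_trivial, this i]
          exact mul_comm _ _
    _ = ∑ i, ∑ j, M i j * (y j * y i) := by
          congr 1; ext i; rw [Finset.sum_mul]; congr 1; ext j; ring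
    _ = ∑ j, ∑ i, M i j * (y j * y i) := Finset.sum_comm
    _ = ∑ i, ∑ j, M i j * (y i * y j) := by
          congr 1; ext j; congr 1; ext i
          have hMsym : M j i = M i j := by
            classical
            rw [hM, adjMat_apply, adjMat_apply]
            simp only [SimpleGraph.adj_comm]
          rw [hMsym]
  rw [← hinner, ← hnorm]
  calc (inner ℝ (T y') y' : ℝ) / ‖y'‖ ^ 2 = RCLike.re (inner ℝ (T y') y' : ℝ) / ‖y'‖ ^ 2 := by
        norm_num
  _ ≤ μ := hQy
  _ ≤ specRad G := hμle

lemma common_nbrs_le {r n : ℕ} {G : SimpleGraph (Fin n)} (hfree : Free (bookGraph r) G)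
    {v w : Fin n} (hvw : G.Adj v w) :
    letI : DecidableRel G.Adj := Classical.decRel _
    (Finset.univ.filter fun z => G.Adj v z ∧ G.Adj w z).card ≤ r := by
  classical
  by_contra hcard
  push_neg at hcard
  set C := (Finset.univ.filter fun z => G.Adj v z ∧ G.Adj w z) with hC
  obtain ⟨C', hsub, hcard'⟩ := Finset.exists_subset_card_eq (Nat.succ_le_of_lt hcard)
  have e := C'.equivFinOfCardEq hcard'
  set g : Fin (r + 1) → Fin n := fun i => ((e.symm i : C') : Fin n) with hg
  have hginj : Function.Injective g := by
    intro i j hij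
    have : (e.symm i : C') = (e.symm j : C') := Subtype.ext hij
    simpa using e.symm.injective this
  have hgmem : ∀ i, G.Adj v (g i) ∧ G.Adj w (g i) := by
    intro i
    have := hsub (e.symm i).prop
    rw [hC, Finset.mem_filter] at this
    exact this.2
  set f : Fin (r + 3) → Fin n := fun i =>
    if h0 : i.val = 0 then v else if h1 : i.val = 1 then w
    else g ⟨i.val - 2, by omega⟩ with hf
  have hfval : ∀ i : Fin (r+3), (i.val = 0 ∧ f i = v) ∨ (i.val = 1 ∧ f i = w) ∨
      (2 ≤ i.val ∧ f i = g ⟨i.val - 2, by omega⟩) := by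
    intro i
    by_cases h0 : i.val = 0
    · left; exact ⟨h0, by simp only [hf]; rw [dif_pos h0]⟩
    by_cases h1 : i.val = 1
    · right; left; exact ⟨h1, by simp only [hf]; rw [dif_neg h0, dif_pos h1]⟩
    · right; right
      exact ⟨by omega, by simp only [hf]; rw [dif_neg h0, dif_neg h1]⟩
  have hhom : ∀ {a b : Fin (r+3)}, (bookGraph r).Adj a b → G.Adj (f a) (f b) := by
    intro a b hab
    rw [bookGraph, SimpleGraph.fromRel_adj] at hab
    obtain ⟨hne, hor⟩ := hab
    rcases hfval a with ⟨ha, hfa⟩ | ⟨ha, hfa⟩ | ⟨ha, hfa⟩ <;>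
      rcases hfval b with ⟨hb, hfb⟩ | ⟨hb, hfb⟩ | ⟨hb, hfb⟩
    · exact absurd (Fin.ext (ha.trans hb.symm)) hne
    · rw [hfa, hfb]; exact hvw
    · rw [hfa, hfb]; exact (hgmem _).1
    · rw [hfa, hfb]; exact hvw.symm
    · exact absurd (Fin.ext (ha.trans hb.symm)) hne
    · rw [hfa, hfb]; exact (hgmem _).2
    · rw [hfa, hfb]; exact ((hgmem _).1).symm
    · rw [hfa, hfb]; exact ((hgmem _).2).symm
    · exfalso; omega
  have hfinj : Function.Injective f := by
    intro a b hab
    rcases hfval a with ⟨ha, hfa⟩ | ⟨ha, hfa⟩ | ⟨ha, hfa⟩ <;>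
      rcases hfval b with ⟨hb, hfb⟩ | ⟨hb, hfb⟩ | ⟨hb, hfb⟩
    · exact Fin.ext (ha.trans hb.symm)
    · exact absurd (hfa.symm.trans (hab.trans hfb)) hvw.ne
    · exfalso; exact ((hgmem _).1).ne' (by rw [← hfa, ← hfb, hab])
    · exact absurd (hfa.symm.trans (hab.trans hfb)).symm hvw.ne
    · exact Fin.ext (ha.trans hb.symm)
    · exfalso; exact ((hgmem _).2).ne' (by rw [← hfa, ← hfb, hab])
    · exfalso; exact ((hgmem _).1).ne' (by rw [← hfb, ← hfa, ← hab])
    · exfalso; exact ((hgmem _).2).ne' (by rw [← hfb, ← hfa, ← hab])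
    · have := hginj (hfa.symm.trans (hab.trans hfb))
      have h2 := congrArg Fin.val this
      simp at h2
      exact Fin.ext (by omega)
  exact hfree ⟨⟨f, hhom⟩, hfinj⟩

def H0 (n s : ℕ) : SimpleGraph (Fin n) :=
  SimpleGraph.fromRel (fun v w =>
    (v.val < s ∧ s ≤ w.val ∧ w.val + 1 < n) ∨ (v.val + 1 = n ∧ (w.val = 0 ∨ w.val = s)))

lemma H0_adj_val {n s : ℕ} {v w : Fin n} (h : (H0 n s).Adj v w) :
    (v.val < s ∧ s ≤ w.val ∧ w.val + 1 < n) ∨ (w.val < s ∧ s ≤ v.val ∧ v.val + 1 < n) ∨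
    (v.val + 1 = n ∧ (w.val = 0 ∨ w.val = s)) ∨ (w.val + 1 = n ∧ (v.val = 0 ∨ v.val = s)) := by
  rw [H0, SimpleGraph.fromRel_adj] at h
  tauto

lemma H0_adj_of {n s : ℕ} {v w : Fin n}
    (h : (v.val < s ∧ s ≤ w.val ∧ w.val + 1 < n) ∨ (v.val + 1 = n ∧ (w.val = 0 ∨ w.val = s)))
    (hs : 1 ≤ s) (hsn : s + 2 ≤ n) : (H0 n s).Adj v w := by
  rw [H0, SimpleGraph.fromRel_adj]
  constructor
  · intro he
    subst he
    omega
  · left; exact h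

lemma H0_nonbip {n s : ℕ} (hs : 1 ≤ s) (hsn : s + 2 ≤ n) : ¬ (H0 n s).Colorable 2 := by
  rintro ⟨C⟩
  have h0n : 0 < n := by omega
  set a : Fin n := ⟨0, by omega⟩
  set b : Fin n := ⟨s, by omega⟩
  set c : Fin n := ⟨n - 1, by omega⟩
  have hab : (H0 n s).Adj a b := H0_adj_of (by left; simp [a, b]; omega) hs hsn
  have hca : (H0 n s).Adj c a := H0_adj_of (by right; simp [a, c]; omega) hs hsn
  have hcb : (H0 n s).Adj c b := H0_adj_of (by right; simp [b, c]; omega) hs hsn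
  have h1 := C.valid hab
  have h2 := C.valid hca
  have h3 := C.valid hcb
  have v1 : (C a).val < 2 := (C a).isLt
  have v2 : (C b).val < 2 := (C b).isLt
  have v3 : (C c).val < 2 := (C c).isLt
  have e1 : (C a).val ≠ (C b).val := fun h => h1 (Fin.ext h)
  have e2 : (C c).val ≠ (C a).val := fun h => h2 (Fin.ext h)
  have e3 : (C c).val ≠ (C b).val := fun h => h3 (Fin.ext h)
  omega

lemma H0_common_unique {n s : ℕ} (hs : 1 ≤ s) (hsn : s + 2 ≤ n) {v w z₁ z₂ : Fin n}
    (hvw : (H0 n s).Adj v w) (h1v : (H0 n s).Adj z₁ v) (h1w : (H0 n s).Adj z₁ w)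
    (h2v : (H0 n s).Adj z₂ v) (h2w : (H0 n s).Adj z₂ w) : z₁ = z₂ := by
  have a0 := H0_adj_val hvw
  have a1 := H0_adj_val h1v
  have a2 := H0_adj_val h1w
  have a3 := H0_adj_val h2v
  have a4 := H0_adj_val h2w
  apply Fin.ext
  omega

lemma H0_free {n s r : ℕ} (hr : 1 ≤ r) (hs : 1 ≤ s) (hsn : s + 2 ≤ n) :
    Free (bookGraph r) (H0 n s) := by
  rintro ⟨f, hinj⟩
  have h2lt : 2 < r + 3 := by omega
  have h3lt : 3 < r + 3 := by omega
  set i0 : Fin (r+3) := ⟨0, by omega⟩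
  set i1 : Fin (r+3) := ⟨1, by omega⟩
  set i2 : Fin (r+3) := ⟨2, h2lt⟩
  set i3 : Fin (r+3) := ⟨3, h3lt⟩
  have hadj : ∀ a b : Fin (r+3), a ≠ b → a.val < 2 → (bookGraph r).Adj a b := by
    intro a b hne ha
    rw [bookGraph, SimpleGraph.fromRel_adj]
    exact ⟨hne, Or.inl ha⟩
  have h01 : (bookGraph r).Adj i0 i1 := hadj _ _ (by simp [i0, i1, Fin.ext_iff]) (by simp [i0])
  have h02 : (bookGraph r).Adj i0 i2 := hadj _ _ (by simp [i0, i2, Fin.ext_iff]) (by simp [i0])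
  have h12 : (bookGraph r).Adj i1 i2 := hadj _ _ (by simp [i1, i2, Fin.ext_iff]) (by simp [i1])
  have h03 : (bookGraph r).Adj i0 i3 := hadj _ _ (by simp [i0, i3, Fin.ext_iff]) (by simp [i0])
  have h13 : (bookGraph r).Adj i1 i3 := hadj _ _ (by simp [i1, i3, Fin.ext_iff]) (by simp [i1])
  have := H0_common_unique hs hsn (f.map_adj h01) (f.map_adj h02).symm (f.map_adj h12).symm
    (f.map_adj h03).symm (f.map_adj h13).symm
  have : i2 = i3 := hinj this
  simp [i2, i3, Fin.ext_iff] at this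

lemma card_filter_lt {n s : ℕ} (hsn : s ≤ n) :
    (Finset.univ.filter fun v : Fin n => v.val < s).card = s := by
  refine Eq.trans ?_ (Fintype.card_fin s)
  apply Finset.card_bij'  (fun (a : Fin n) (ha : a ∈ _) => (⟨a.val, (Finset.mem_filter.1 ha).2⟩ : Fin s))
    (fun (b : Fin s) _ => (⟨b.val, by omega⟩ : Fin n))
  · intro a ha; rfl
  · intro b hb; rfl
  · intro a ha; exact Finset.mem_univ _
  · intro b hb
    simp only [Finset.mem_filter, Finset.mem_univ, true_and]
    exact b.isLt

lemma card_filter_mid {n s t : ℕ} (hst : s + t + 1 = n) :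
    (Finset.univ.filter fun v : Fin n => ¬ v.val < s ∧ v.val + 1 < n).card = t := by
  refine Eq.trans ?_ (Fintype.card_fin t)
  apply Finset.card_bij'  (fun (a : Fin n) (ha : a ∈ _) =>
      (⟨a.val - s, by have := (Finset.mem_filter.1 ha).2; omega⟩ : Fin t))
    (fun (b : Fin t) _ => (⟨b.val + s, by omega⟩ : Fin n))
  · intro a ha
    have := (Finset.mem_filter.1 ha).2
    apply Fin.ext
    simp
    omega
  · intro b hb
    apply Fin.ext
    simp
  · intro a ha; exact Finset.mem_univ _
  · intro b hb
    simp only [Finset.mem_filter, Finset.mem_univ, true_and]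
    constructor
    · omega
    · have := b.isLt; omega

lemma sum_split3 {n s : ℕ} (f : Fin n → ℝ) :
    ∑ v, f v = (∑ v ∈ Finset.univ.filter (fun v : Fin n => v.val < s), f v)
      + (∑ v ∈ Finset.univ.filter (fun v : Fin n => ¬ v.val < s ∧ v.val + 1 < n), f v)
      + (∑ v ∈ Finset.univ.filter (fun v : Fin n => ¬ v.val < s ∧ ¬ v.val + 1 < n), f v) := by
  classical
  rw [← Finset.sum_filter_add_sum_filter_not Finset.univ (fun v : Fin n => v.val < s) f]
  rw [add_assoc]
  congr 1
  rw [← Finset.sum_filter_add_sum_filter_not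
    (Finset.univ.filter (fun v : Fin n => ¬ v.val < s)) (fun v : Fin n => v.val + 1 < n) f]
  congr 1 <;> rw [Finset.filter_filter] <;> apply Finset.sum_congr rfl <;> intros <;> rfl

lemma H0_specRad {n s t : ℕ} (hs : 1 ≤ s) (ht : 1 ≤ t) (hst : s + t + 1 = n) :
    Real.sqrt ((s : ℝ) * t) ≤ specRad (H0 n s) := by
  classical
  have hn : 0 < n := by omega
  have hsn : s + 2 ≤ n := by omega
  have hts : (0:ℝ) < t := by exact_mod_cast ht
  have hss : (0:ℝ) < s := by exact_mod_cast hs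
  set y : Fin n → ℝ := fun v =>
    if v.val < s then Real.sqrt t else if v.val + 1 < n then Real.sqrt s else 0 with hy_def
  have hy : y ≠ 0 := by
    intro h
    have h0 := congrFun h ⟨0, hn⟩
    have h1 : (0:ℕ) < s := hs
    have h2 : (0:ℝ) < Real.sqrt t := Real.sqrt_pos.2 hts
    simp only [hy_def, Pi.zero_apply] at h0
    norm_num [h1] at h0
    exact absurd h0 (by positivity)
  set SS := Finset.univ.filter (fun v : Fin n => v.val < s) with hSS
  set TT := Finset.univ.filter (fun v : Fin n => ¬ v.val < s ∧ v.val + 1 < n) with hTT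
  set WW := Finset.univ.filter (fun v : Fin n => ¬ v.val < s ∧ ¬ v.val + 1 < n) with hWW
  have hcardS : SS.card = s := card_filter_lt (by omega)
  have hcardT : TT.card = t := card_filter_mid hst
  have hyS : ∀ v ∈ SS, y v = Real.sqrt t := by
    intro v hv
    have := (Finset.mem_filter.1 hv).2
    simp [hy_def, this]
  have hyT : ∀ v ∈ TT, y v = Real.sqrt s := by
    intro v hv
    have := (Finset.mem_filter.1 hv).2
    simp [hy_def, this.1, this.2]
  have hyW : ∀ v ∈ WW, y v = 0 := by
    intro v hv
    have := (Finset.mem_filter.1 hv).2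
    simp [hy_def, this.1, this.2]
  -- inner sums
  have hinnerS : ∀ v : Fin n, v.val < s →
      (∑ j, adjMat (H0 n s) v j * y j) = t * Real.sqrt s := by
    intro v hv
    rw [sum_split3 (s := s)]
    have e1 : (∑ j ∈ SS, adjMat (H0 n s) v j * y j) = 0 := by
      apply Finset.sum_eq_zero
      intro j hj
      have hjs := (Finset.mem_filter.1 hj).2
      have : ¬ (H0 n s).Adj v j := by
        intro hadj
        have := H0_adj_val hadj
        omega
      rw [adjMat_apply, if_neg this, zero_mul]
    have e2 : (∑ j ∈ TT, adjMat (H0 n s) v j * y j) = t * Real.sqrt s := by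
      have : ∀ j ∈ TT, adjMat (H0 n s) v j * y j = Real.sqrt s := by
        intro j hj
        have hjt := (Finset.mem_filter.1 hj).2
        have hadj : (H0 n s).Adj v j := H0_adj_of (by left; omega) hs hsn
        rw [adjMat_apply, if_pos hadj, one_mul, hyT j hj]
      rw [Finset.sum_congr rfl this, Finset.sum_const, hcardT, nsmul_eq_mul]
    have e3 : (∑ j ∈ WW, adjMat (H0 n s) v j * y j) = 0 := by
      apply Finset.sum_eq_zero
      intro j hj
      rw [hyW j hj, mul_zero]
    rw [e1, e2, e3]
    ring
  have hinnerT : ∀ v : Fin n, ¬ v.val < s → v.val + 1 < n →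
      (∑ j, adjMat (H0 n s) v j * y j) = s * Real.sqrt t := by
    intro v hv1 hv2
    rw [sum_split3 (s := s)]
    have e1 : (∑ j ∈ SS, adjMat (H0 n s) v j * y j) = s * Real.sqrt t := by
      have : ∀ j ∈ SS, adjMat (H0 n s) v j * y j = Real.sqrt t := by
        intro j hj
        have hjs := (Finset.mem_filter.1 hj).2
        have hadj : (H0 n s).Adj v j := (H0_adj_of (v := j) (by left; omega) hs hsn).symm
        rw [adjMat_apply, if_pos hadj, one_mul, hyS j hj]
      rw [Finset.sum_congr rfl this, Finset.sum_const, hcardS, nsmul_eq_mul]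
    have e2 : (∑ j ∈ TT, adjMat (H0 n s) v j * y j) = 0 := by
      apply Finset.sum_eq_zero
      intro j hj
      have hjt := (Finset.mem_filter.1 hj).2
      have : ¬ (H0 n s).Adj v j := by
        intro hadj
        have := H0_adj_val hadj
        omega
      rw [adjMat_apply, if_neg this, zero_mul]
    have e3 : (∑ j ∈ WW, adjMat (H0 n s) v j * y j) = 0 := by
      apply Finset.sum_eq_zero
      intro j hj
      rw [hyW j hj, mul_zero]
    rw [e1, e2, e3]
    ring
  -- numerator
  have hnum : (∑ i, ∑ j, adjMat (H0 n s) i j * (y i * y j))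
      = 2 * (s * t) * (Real.sqrt s * Real.sqrt t) := by
    have hrw : ∀ i : Fin n, (∑ j, adjMat (H0 n s) i j * (y i * y j))
        = y i * ∑ j, adjMat (H0 n s) i j * y j := by
      intro i
      rw [Finset.mul_sum]
      apply Finset.sum_congr rfl
      intros j _
      ring
    rw [Finset.sum_congr rfl (fun i _ => hrw i)]
    rw [sum_split3 (s := s)]
    have e1 : (∑ v ∈ SS, y v * ∑ j, adjMat (H0 n s) v j * y j)
        = s * (Real.sqrt t * (t * Real.sqrt s)) := by
      have : ∀ v ∈ SS, y v * (∑ j, adjMat (H0 n s) v j * y j)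
          = Real.sqrt t * (t * Real.sqrt s) := by
        intro v hv
        rw [hyS v hv, hinnerS v (Finset.mem_filter.1 hv).2]
      rw [Finset.sum_congr rfl this, Finset.sum_const, hcardS, nsmul_eq_mul]
    have e2 : (∑ v ∈ TT, y v * ∑ j, adjMat (H0 n s) v j * y j)
        = t * (Real.sqrt s * (s * Real.sqrt t)) := by
      have : ∀ v ∈ TT, y v * (∑ j, adjMat (H0 n s) v j * y j)
          = Real.sqrt s * (s * Real.sqrt t) := by
        intro v hv
        have hm := (Finset.mem_filter.1 hv).2
        rw [hyT v hv, hinnerT v hm.1 hm.2]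
      rw [Finset.sum_congr rfl this, Finset.sum_const, hcardT, nsmul_eq_mul]
    have e3 : (∑ v ∈ WW, y v * ∑ j, adjMat (H0 n s) v j * y j) = 0 := by
      apply Finset.sum_eq_zero
      intro v hv
      rw [hyW v hv, zero_mul]
    rw [e1, e2, e3]
    ring
  have hden : (∑ i, y i ^ 2) = 2 * (s * t) := by
    rw [sum_split3 (s := s)]
    have e1 : (∑ v ∈ SS, y v ^ 2) = s * t := by
      have : ∀ v ∈ SS, y v ^ 2 = (t : ℝ) := by
        intro v hv
        rw [hyS v hv, Real.sq_sqrt hts.le]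
      rw [Finset.sum_congr rfl this, Finset.sum_const, hcardS, nsmul_eq_mul]
    have e2 : (∑ v ∈ TT, y v ^ 2) = t * s := by
      have : ∀ v ∈ TT, y v ^ 2 = (s : ℝ) := by
        intro v hv
        rw [hyT v hv, Real.sq_sqrt hss.le]
      rw [Finset.sum_congr rfl this, Finset.sum_const, hcardT, nsmul_eq_mul]
    have e3 : (∑ v ∈ WW, y v ^ 2) = 0 := by
      apply Finset.sum_eq_zero
      intro v hv
      rw [hyW v hv]
      ring
    rw [e1, e2, e3]
    ring
  have := specRad_ge_rayleigh hn (H0 n s) y hy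
  rw [hnum, hden] at this
  have hstpos : (0:ℝ) < 2 * (s * t) := by positivity
  calc Real.sqrt ((s:ℝ) * t) = Real.sqrt s * Real.sqrt t := Real.sqrt_mul hss.le _
  _ = 2 * (s * t) * (Real.sqrt s * Real.sqrt t) / (2 * (s * t)) := by
        field_simp
  _ ≤ specRad (H0 n s) := this

lemma int_arith (R N V Aa Bb S T : ℤ) (iR : 1 ≤ R) (iN : 8*(R^2+R+4) ≤ N)
    (iV : 2 ≤ V) (iVA : 2*V ≤ Aa) (iAB : Aa + Bb + 1 = N)
    (iST : S + T = Aa + Bb) (iTS1 : T ≤ S) (iTS2 : S ≤ T + 1) (i2S : 2*S ≤ N)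
    (iB : 0 ≤ Bb)
    (imain : S*T + V*(Bb+1) ≤ Aa + 5*V*R + Aa*Bb) : False := by
  have hD : Aa*Bb = S*T - (Aa-S)*(Aa-T) := by linear_combination (-Aa) * iST
  have hDpos : 0 ≤ (Aa-S)*(Aa-T) := by
    rcases le_or_gt Aa T with h | h
    · have h1 : Aa - S ≤ 0 := by omega
      have h2 : Aa - T ≤ 0 := by omega
      calc (0:ℤ) ≤ (-(Aa-S)) * (-(Aa-T)) := mul_nonneg (by omega) (by omega)
      _ = (Aa-S)*(Aa-T) := by ring
    · exact mul_nonneg (by omega) (by omega)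
  have hmain2 : V*(Bb+1) + (Aa-S)*(Aa-T) ≤ Aa + 5*V*R := by linarith [imain, hD]
  rcases le_or_gt (6*R) Bb with hb | hb
  · -- case B large
    have h1 : 2*(Bb+1-5*R) ≤ V*(Bb+1-5*R) := by
      apply mul_le_mul_of_nonneg_right iV
      omega
    have h2 : 2*(Bb+1) - 10*R + (Aa-S)*(Aa-T) ≤ Aa := by nlinarith [hmain2, h1]
    have h3 : 2*N + (Aa-S)*(Aa-T) ≤ 3*Aa + 10*R := by omega
    rcases le_or_gt Aa S with ha | ha
    · nlinarith [h3, hDpos, i2S, iN, iR, ha, sq_nonneg (R-1)]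
    · have hd1 : 1 ≤ Aa - S := by omega
      have hDd : (Aa-S)^2 ≤ (Aa-S)*(Aa-T) := by
        rw [sq]
        apply mul_le_mul_of_nonneg_left (by omega) (by omega)
      nlinarith [h3, hDd, i2S, iN, iR, hd1, sq_nonneg (Aa - S - 1), sq_nonneg (R-1)]
  · -- case B small
    have ha : N - 6*R ≤ Aa := by omega
    have hdpos : 0 < N - 12*R := by nlinarith [iN, iR, sq_nonneg (R-1)]
    have hd : N - 12*R ≤ 2*(Aa - S) := by omega
    have hDd : (Aa-S)^2 ≤ (Aa-S)*(Aa-T) := by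
      rw [sq]
      apply mul_le_mul_of_nonneg_left (by omega) (by omega)
    have h4D : (N-12*R)^2 ≤ 4*((Aa-S)*(Aa-T)) := by nlinarith [hd, hDd, hdpos]
    have hDa : (Aa-S)*(Aa-T) ≤ Aa + 5*V*R := by
      linarith [hmain2, mul_nonneg (by omega : (0:ℤ) ≤ V) (by omega : (0:ℤ) ≤ Bb+1)]
    have h5 : 2*((Aa-S)*(Aa-T)) ≤ Aa*(2+5*R) := by
      linarith [hDa, mul_le_mul_of_nonneg_right iVA (by omega : (0:ℤ) ≤ 5*R)]
    have hAn : Aa ≤ N := by omega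
    have h6 : (N-12*R)^2 ≤ 2*N*(2+5*R) := by
      linarith [h4D, h5, mul_nonneg (by omega : (0:ℤ) ≤ N - Aa) (by omega : (0:ℤ) ≤ 2+5*R)]
    have hN34 : 34*R + 4 < N := by linarith [iN, sq_nonneg (4*R-7), iR]
    have hNpos : (0:ℤ) < N := by omega
    linarith [h6, sq_nonneg R, mul_pos hNpos (by omega : (0:ℤ) < N - 34*R - 4)]

lemma final_arith (r n ν a b s0 t0 : ℕ) (hr : 1 ≤ r) (hn : 8*(r^2+r+4) ≤ n)
    (hv : 2 ≤ ν) (hva : 2*ν ≤ a) (hab : a + b + 1 = n)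
    (ht0 : t0 = (n-1)/2) (hs0 : s0 = n - 1 - t0)
    (hmain : s0*t0 + ν*(b+1) ≤ a + 5*ν*r + a*b) : False := by
  have hst : s0 + t0 = a + b := by omega
  have hts1 : t0 ≤ s0 := by omega
  have hts2 : s0 ≤ t0 + 1 := by omega
  have h2s : 2*s0 ≤ n := by omega
  exact int_arith (r:ℤ) (n:ℤ) (ν:ℤ) (a:ℤ) (b:ℤ) (s0:ℤ) (t0:ℤ)
    (by exact_mod_cast hr) (by exact_mod_cast hn) (by exact_mod_cast hv)
    (by exact_mod_cast hva) (by exact_mod_cast hab) (by exact_mod_cast hst)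
    (by exact_mod_cast hts1) (by exact_mod_cast hts2) (by exact_mod_cast h2s)
    (Int.ofNat_nonneg b) (by exact_mod_cast hmain)

-- counting helpers
lemma card_pairs {n : ℕ} (S T : Finset (Fin n)) (Rel : Fin n → Fin n → Prop)
    [DecidablePred fun p : Fin n × Fin n => Rel p.1 p.2] [∀ v, DecidablePred (Rel v)] :
    ((S ×ˢ T).filter fun p => Rel p.1 p.2).card = ∑ v ∈ S, (T.filter (fun w => Rel v w)).card := by
  rw [Finset.card_filter, Finset.sum_product]
  apply Finset.sum_congr rfl
  intro v _
  rw [Finset.card_filter]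

lemma card_pairs' {n : ℕ} (S T : Finset (Fin n)) (Rel : Fin n → Fin n → Prop)
    [DecidablePred fun p : Fin n × Fin n => Rel p.1 p.2] [∀ w, DecidablePred (fun v => Rel v w)] :
    ((S ×ˢ T).filter fun p => Rel p.1 p.2).card = ∑ w ∈ T, (S.filter (fun v => Rel v w)).card := by
  rw [Finset.card_filter, Finset.sum_product]
  rw [Finset.sum_comm]
  apply Finset.sum_congr rfl
  intro w _
  rw [Finset.card_filter]

end

/-- In the extremal setup, `ν(G*[A]) ≤ 1`. -/
theorem matching_A_le_one (r n : ℕ) (hr : 1 ≤ r) (hn : 8 * (r ^ 2 + r + 4) ≤ n)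
    (G : SimpleGraph (Fin n)) (hconn : G.Connected) (hnonbip : ¬ G.Colorable 2)
    (hfree : Free (bookGraph r) G)
    (hmax : ∀ H : SimpleGraph (Fin n), ¬ H.Colorable 2 → Free (bookGraph r) H →
      specRad H ≤ specRad G)
    (x : Fin n → ℝ) (hxpos : ∀ v, 0 < x v) (hxunit : ∑ v, x v ^ 2 = 1)
    (heig : adjMat G *ᵥ x = specRad G • x)
    (u : Fin n) (hu : ∀ v, x v ≤ x u)
    (A B : Finset (Fin n)) (hA : ∀ v, v ∈ A ↔ G.Adj u v)
    (hB : ∀ v, v ∈ B ↔ v ≠ u ∧ v ∉ A) :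
    matchingNumberOn G A ≤ 1 := by
  classical
  by_contra hcon
  -- extract a matching of size at least 2
  have hex : ∃ k ∈ {k | ∃ M : Finset (Sym2 (Fin n)), ↑M ⊆ G.edgeSet ∧
      (∀ e ∈ M, ∀ v ∈ e, v ∈ A) ∧ M.card = k ∧
      (M : Set (Sym2 (Fin n))).Pairwise fun e f => ∀ v, v ∈ e → v ∉ f}, 1 < k := by
    by_contra h
    push_neg at h
    exact hcon (csSup_le' h)
  obtain ⟨k, ⟨M₀, hM₀e, hM₀A, hM₀c, hM₀p⟩, hk⟩ := hex
  -- a maximum matching within A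
  set P : Finset (Sym2 (Fin n)) → Prop := fun M => ↑M ⊆ G.edgeSet ∧
    (∀ e ∈ M, ∀ v ∈ e, v ∈ A) ∧
    (M : Set (Sym2 (Fin n))).Pairwise fun e f => ∀ v, v ∈ e → v ∉ f with hP
  set F : Finset (Finset (Sym2 (Fin n))) := Finset.univ.filter P with hF
  have hF0 : M₀ ∈ F := by
    rw [hF, Finset.mem_filter]
    exact ⟨Finset.mem_univ _, hM₀e, hM₀A, hM₀p⟩
  obtain ⟨M, hMF, hMmax⟩ := F.exists_max_image Finset.card ⟨M₀, hF0⟩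
  have hMP : P M := (Finset.mem_filter.1 hMF).2
  obtain ⟨hMe, hMA, hMp⟩ := hMP
  set ν := M.card with hν
  have hν2 : 2 ≤ ν := by
    have := hMmax M₀ hF0
    omega
  set a := A.card with ha
  set b := B.card with hb
  -- basic structure
  have huA : u ∉ A := fun h => G.irrefl ((hA u).1 h)
  have huB : u ∉ B := fun h => ((hB u).1 h).1 rfl
  have hdisjAB : Disjoint A B := by
    rw [Finset.disjoint_left]
    intro v hvA hvB
    exact ((hB v).1 hvB).2 hvA
  have huniv : (Finset.univ : Finset (Fin n)) = insert u (A ∪ B) := by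
    ext v
    simp only [Finset.mem_univ, true_iff, Finset.mem_insert, Finset.mem_union]
    by_cases h1 : v = u
    · exact Or.inl h1
    by_cases h2 : v ∈ A
    · exact Or.inr (Or.inl h2)
    · exact Or.inr (Or.inr ((hB v).2 ⟨h1, h2⟩))
  have huAB : u ∉ A ∪ B := by
    rw [Finset.mem_union]
    rintro (h | h)
    exacts [huA h, huB h]
  have hcount : a + b + 1 = n := by
    have h1 : (Finset.univ : Finset (Fin n)).card = n := by simp
    rw [huniv, Finset.card_insert_of_notMem huAB, Finset.card_union_of_disjoint hdisjAB] at h1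
    omega
  -- common neighbour bounds
  have hcn : ∀ v w : Fin n, G.Adj v w →
      (Finset.univ.filter fun z => G.Adj v z ∧ G.Adj w z).card ≤ r := by
    intro v w hvw
    have := common_nbrs_le hfree hvw
    convert this using 2
  have hdA : ∀ v ∈ A, (A.filter fun w => G.Adj v w).card ≤ r := by
    intro v hv
    refine le_trans (Finset.card_le_card ?_) (hcn u v ((hA v).1 hv))
    intro w hw
    rw [Finset.mem_filter] at hw ⊢
    exact ⟨Finset.mem_univ _, (hA w).1 hw.1, hw.2⟩
  -- matched vertices
  set VM : Finset (Fin n) := M.biUnion (fun e => Finset.univ.filter (· ∈ e)) with hVM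
  have hVMmem : ∀ z, z ∈ VM ↔ ∃ e ∈ M, z ∈ e := by
    intro z
    rw [hVM, Finset.mem_biUnion]
    simp
  have hVMA : VM ⊆ A := by
    intro z hz
    obtain ⟨e, heM, hze⟩ := (hVMmem z).1 hz
    exact hMA e heM z hze
  have hedge2 : ∀ e ∈ M, (Finset.univ.filter (· ∈ e)).card = 2 := by
    intro e
    induction e using Sym2.ind with
    | _ v w =>
      intro he
      have hadj : G.Adj v w := (G.mem_edgeSet).1 (hMe he)
      have hvw : v ≠ w := hadj.ne
      have : (Finset.univ.filter (· ∈ s(v, w))) = {v, w} := by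
        ext z
        simp [Sym2.mem_iff]
      rw [this, Finset.card_insert_of_notMem (by simp [hvw]), Finset.card_singleton]
  have hMdisj : ∀ e ∈ M, ∀ f ∈ M, e ≠ f →
      Disjoint (Finset.univ.filter (· ∈ e)) (Finset.univ.filter (· ∈ f)) := by
    intro e he f hf hef
    rw [Finset.disjoint_left]
    intro z hze hzf
    rw [Finset.mem_filter] at hze hzf
    exact hMp he hf hef z hze.2 hzf.2
  have hVMcard : VM.card = 2 * ν := by
    rw [hVM, Finset.card_biUnion hMdisj]
    rw [Finset.sum_congr rfl hedge2, Finset.sum_const, smul_eq_mul]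
    omega
  have h2νa : 2 * ν ≤ a := by
    rw [← hVMcard]
    exact Finset.card_le_card hVMA
  -- maximality of M
  have hmaxm : ∀ v w : Fin n, G.Adj v w → v ∈ A → w ∈ A → v ∉ VM → w ∉ VM → False := by
    intro v w hadj hvA hwA hvVM hwVM
    have hnotin : s(v, w) ∉ M := by
      intro h
      exact hvVM ((hVMmem v).2 ⟨_, h, Sym2.mem_mk_left v w⟩)
    have hmem : ∀ z, z ∈ s(v,w) → z ∉ VM := by
      intro z hz
      rcases Sym2.mem_iff.1 hz with rfl | rfl
      exacts [hvVM, hwVM]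
    have hP' : P (insert s(v,w) M) := by
      refine ⟨?_, ?_, ?_⟩
      · rw [Finset.coe_insert]
        rw [Set.insert_subset_iff]
        exact ⟨(G.mem_edgeSet).2 hadj, hMe⟩
      · intro e he z hz
        rcases Finset.mem_insert.1 he with rfl | he
        · rcases Sym2.mem_iff.1 hz with rfl | rfl
          exacts [hvA, hwA]
        · exact hMA e he z hz
      · rw [Finset.coe_insert]
        apply Set.Pairwise.insert hMp
        intro f hf hne
        constructor
        · intro z hz hzf
          exact hmem z hz ((hVMmem z).2 ⟨f, hf, hzf⟩)
        · intro z hzf hz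
          exact hmem z hz ((hVMmem z).2 ⟨f, hf, hzf⟩)
    have hFmem : insert s(v,w) M ∈ F := by
      rw [hF, Finset.mem_filter]
      exact ⟨Finset.mem_univ _, hP'⟩
    have := hMmax _ hFmem
    rw [Finset.card_insert_of_notMem hnotin] at this
    omega
  -- cAA bound
  set cAA := ((A ×ˢ A).filter fun p => G.Adj p.1 p.2).card with hcAAdef
  have hcAA : cAA ≤ 4 * ν * r := by
    have hsub : ((A ×ˢ A).filter fun p => G.Adj p.1 p.2) ⊆
        ((VM ×ˢ A).filter fun p => G.Adj p.1 p.2) ∪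
        ((A ×ˢ VM).filter fun p => G.Adj p.1 p.2) := by
      intro p hp
      rw [Finset.mem_filter, Finset.mem_product] at hp
      obtain ⟨⟨h1, h2⟩, h3⟩ := hp
      by_cases hv : p.1 ∈ VM
      · apply Finset.mem_union_left
        rw [Finset.mem_filter, Finset.mem_product]
        exact ⟨⟨hv, h2⟩, h3⟩
      by_cases hw : p.2 ∈ VM
      · apply Finset.mem_union_right
        rw [Finset.mem_filter, Finset.mem_product]
        exact ⟨⟨h1, hw⟩, h3⟩
      · exact absurd (hmaxm p.1 p.2 h3 h1 h2 hv hw) (by simp)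
    have h1 : ((VM ×ˢ A).filter fun p => G.Adj p.1 p.2).card ≤ 2 * ν * r := by
      rw [card_pairs VM A G.Adj]
      calc ∑ v ∈ VM, (A.filter fun w => G.Adj v w).card ≤ ∑ v ∈ VM, r :=
            Finset.sum_le_sum (fun v hv => hdA v (hVMA hv))
      _ = 2 * ν * r := by rw [Finset.sum_const, hVMcard, smul_eq_mul]
    have h2 : ((A ×ˢ VM).filter fun p => G.Adj p.1 p.2).card ≤ 2 * ν * r := by
      rw [card_pairs' A VM G.Adj]
      have : ∀ w ∈ VM, (A.filter fun v => G.Adj v w).card ≤ r := by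
        intro w hw
        have : (A.filter fun v => G.Adj v w) = (A.filter fun v => G.Adj w v) := by
          apply Finset.filter_congr
          intro z _
          rw [SimpleGraph.adj_comm]
        rw [this]
        exact hdA w (hVMA hw)
      calc ∑ w ∈ VM, (A.filter fun v => G.Adj v w).card ≤ ∑ w ∈ VM, r :=
            Finset.sum_le_sum this
      _ = 2 * ν * r := by rw [Finset.sum_const, hVMcard, smul_eq_mul]
    calc cAA ≤ (((VM ×ˢ A).filter fun p => G.Adj p.1 p.2) ∪
        ((A ×ˢ VM).filter fun p => G.Adj p.1 p.2)).card := Finset.card_le_card hsub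
    _ ≤ _ + _ := Finset.card_union_le _ _
    _ ≤ 2 * ν * r + 2 * ν * r := add_le_add h1 h2
    _ = 4 * ν * r := by ring
  -- cAB and non-adjacent pairs
  set cAB := ((A ×ˢ B).filter fun p => G.Adj p.1 p.2).card with hcABdef
  set NA := ((A ×ˢ B).filter fun p => ¬ G.Adj p.1 p.2) with hNAdef
  have hsplitAB : cAB + NA.card = a * b := by
    rw [hcABdef, hNAdef, Finset.card_filter_add_card_filter_not, Finset.card_product]
  have hNAe : ∀ e ∈ M, b + 1 ≤ (NA.filter fun p => p.1 ∈ e).card + r := by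
    intro e
    induction e using Sym2.ind with
    | _ v w =>
      intro he
      have hadj : G.Adj v w := (G.mem_edgeSet).1 (hMe he)
      have hvA : v ∈ A := hMA _ he v (Sym2.mem_mk_left v w)
      have hwA : w ∈ A := hMA _ he w (Sym2.mem_mk_right v w)
      set CB := B.filter (fun z => G.Adj v z ∧ G.Adj w z) with hCB
      have hCBu : u ∉ CB := fun h => huB (Finset.mem_filter.1 h).1
      have hCBr : CB.card + 1 ≤ r := by
        have hsub : insert u CB ⊆ Finset.univ.filter fun z => G.Adj v z ∧ G.Adj w z := by
          intro z hz
          rcases Finset.mem_insert.1 hz with rfl | hz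
          · rw [Finset.mem_filter]
            exact ⟨Finset.mem_univ _, ((hA v).1 hvA).symm, ((hA w).1 hwA).symm⟩
          · rw [Finset.mem_filter] at hz ⊢
            exact ⟨Finset.mem_univ _, hz.2⟩
        calc CB.card + 1 = (insert u CB).card := (Finset.card_insert_of_notMem hCBu).symm
        _ ≤ _ := Finset.card_le_card hsub
        _ ≤ r := hcn v w hadj
      -- injection from B \ CB into the filtered non-adjacent pairs
      have hinj : (B \ CB).card ≤ (NA.filter fun p => p.1 ∈ s(v,w)).card := by
        apply Finset.card_le_card_of_injOn (fun z => if G.Adj v z then (w, z) else (v, z))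
        · intro z hz
          simp only [Finset.mem_coe, Finset.mem_sdiff] at hz ⊢
          obtain ⟨hzB, hzCB⟩ := hz
          have hnot : ¬ (G.Adj v z ∧ G.Adj w z) := by
            intro h
            exact hzCB (Finset.mem_filter.2 ⟨hzB, h⟩)
          by_cases hvz : G.Adj v z
          · have hwz : ¬ G.Adj w z := fun h => hnot ⟨hvz, h⟩
            simp only [if_pos hvz]
            rw [Finset.mem_filter, hNAdef, Finset.mem_filter, Finset.mem_product]
            exact ⟨⟨⟨hwA, hzB⟩, hwz⟩, Sym2.mem_mk_right v w⟩
          · simp only [if_neg hvz]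
            rw [Finset.mem_filter, hNAdef, Finset.mem_filter, Finset.mem_product]
            exact ⟨⟨⟨hvA, hzB⟩, hvz⟩, Sym2.mem_mk_left v w⟩
        · intro z1 _ z2 _ heq
          have h1 : ∀ z, ((if G.Adj v z then ((w, z) : Fin n × Fin n) else (v, z))).2 = z := by
            intro z
            by_cases h : G.Adj v z <;> simp [h]
          have h2 := congrArg Prod.snd heq
          simp only at h2
          rw [h1 z1, h1 z2] at h2
          exact h2
      have hBle : b ≤ (B \ CB).card + CB.card := Finset.card_le_card_sdiff_add_card
      omega
  have hNAdisj : ∀ e ∈ M, ∀ f ∈ M, e ≠ f →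
      Disjoint (NA.filter fun p => p.1 ∈ e) (NA.filter fun p => p.1 ∈ f) := by
    intro e he f hf hef
    rw [Finset.disjoint_left]
    intro p hp1 hp2
    rw [Finset.mem_filter] at hp1 hp2
    exact hMp he hf hef p.1 hp1.2 hp2.2
  have hNAsum : ∑ e ∈ M, (NA.filter fun p => p.1 ∈ e).card ≤ NA.card := by
    rw [← Finset.card_biUnion hNAdisj]
    apply Finset.card_le_card
    intro p hp
    rw [Finset.mem_biUnion] at hp
    obtain ⟨e, _, hpe⟩ := hp
    exact (Finset.mem_filter.1 hpe).1
  have hABsave : ν * (b + 1) + cAB ≤ a * b + ν * r := by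
    have h1 : ν * (b + 1) ≤ NA.card + ν * r := by
      calc ν * (b + 1) = ∑ _e ∈ M, (b + 1) := by rw [Finset.sum_const, smul_eq_mul, ← hν]
      _ ≤ ∑ e ∈ M, ((NA.filter fun p => p.1 ∈ e).card + r) := Finset.sum_le_sum hNAe
      _ = (∑ e ∈ M, (NA.filter fun p => p.1 ∈ e).card) + ν * r := by
            rw [Finset.sum_add_distrib, Finset.sum_const, smul_eq_mul, ← hν]
      _ ≤ NA.card + ν * r := by omega
    omega
  -- spectral bounds
  set ρ := specRad G with hρ
  have hrow : ∀ i, ∑ j, adjMat G i j * x j = ρ * x i := by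
    intro i
    have := congrFun heig i
    simpa [Matrix.mulVec, dotProduct] using this
  have hAfilter : A = Finset.univ.filter (fun v => G.Adj u v) := by
    ext v
    simp [hA v]
  have hstep1 : ρ * x u = ∑ v ∈ A, x v := by
    rw [← hrow u, hAfilter]
    rw [Finset.sum_filter]
    apply Finset.sum_congr rfl
    intro j _
    by_cases h : G.Adj u j <;> simp [adjMat_apply, h]
  have hsumad : ∀ (S : Finset (Fin n)) (v : Fin n),
      ∑ j ∈ S, adjMat G v j = ((S.filter (fun w => G.Adj v w)).card : ℝ) := by
    intro S v
    rw [Finset.card_filter]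
    push_cast
    apply Finset.sum_congr rfl
    intro j _
    by_cases h : G.Adj v j <;> simp [adjMat_apply, h]
  have hstep2 : ρ * ρ * x u ≤ ((a : ℝ) + cAA + cAB) * x u := by
    have hxu : 0 < x u := hxpos u
    have e1 : ρ * ρ * x u = ∑ v ∈ A, (∑ j, adjMat G v j * x j) := by
      rw [mul_assoc, hstep1, Finset.mul_sum]
      apply Finset.sum_congr rfl
      intro v _
      rw [hrow v]
    have e2 : ∀ v, (∑ j, adjMat G v j * x j) ≤ (∑ j, adjMat G v j) * x u := by
      intro v
      rw [Finset.sum_mul]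
      apply Finset.sum_le_sum
      intro j _
      exact mul_le_mul_of_nonneg_left (hu j) (adjMat_nonneg G v j)
    have e3 : ∑ v ∈ A, (∑ j, adjMat G v j) * x u = ((a:ℝ) + cAA + cAB) * x u := by
      rw [← Finset.sum_mul]
      congr 1
      have e4 : ∀ v ∈ A, ∑ j, adjMat G v j
          = adjMat G v u + ∑ j ∈ A, adjMat G v j + ∑ j ∈ B, adjMat G v j := by
        intro v _
        rw [show (Finset.univ : Finset (Fin n)) = insert u (A ∪ B) from huniv,
          Finset.sum_insert huAB, Finset.sum_union hdisjAB]
        ring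
      rw [Finset.sum_congr rfl e4]
      rw [Finset.sum_add_distrib, Finset.sum_add_distrib]
      have f1 : ∑ v ∈ A, adjMat G v u = (a : ℝ) := by
        have : ∀ v ∈ A, adjMat G v u = 1 := by
          intro v hv
          rw [adjMat_apply, if_pos ((hA v).1 hv).symm]
        rw [Finset.sum_congr rfl this, Finset.sum_const]
        simp [ha]
      have f2 : ∑ v ∈ A, ∑ j ∈ A, adjMat G v j = (cAA : ℝ) := by
        rw [hcAAdef, card_pairs A A G.Adj]
        push_cast
        apply Finset.sum_congr rfl
        intro v _
        rw [hsumad]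
      have f3 : ∑ v ∈ A, ∑ j ∈ B, adjMat G v j = (cAB : ℝ) := by
        rw [hcABdef, card_pairs A B G.Adj]
        push_cast
        apply Finset.sum_congr rfl
        intro v _
        rw [hsumad]
      rw [f1, f2, f3]
    calc ρ * ρ * x u = ∑ v ∈ A, (∑ j, adjMat G v j * x j) := e1
    _ ≤ ∑ v ∈ A, (∑ j, adjMat G v j) * x u := Finset.sum_le_sum (fun v _ => e2 v)
    _ = ((a:ℝ) + cAA + cAB) * x u := e3
  have hρ2 : ρ * ρ ≤ (a : ℝ) + cAA + cAB :=
    le_of_mul_le_mul_right hstep2 (hxpos u)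
  -- lower bound via H0
  set t0 := (n - 1) / 2 with ht0
  set s0 := n - 1 - t0 with hs0
  have hs01 : 1 ≤ s0 := by omega
  have ht01 : 1 ≤ t0 := by omega
  have hst0 : s0 + t0 + 1 = n := by omega
  have hs0n : s0 + 2 ≤ n := by omega
  have hH0 : specRad (H0 n s0) ≤ ρ :=
    hmax _ (H0_nonbip hs01 hs0n) (H0_free hr hs01 hs0n)
  have hsq : Real.sqrt ((s0 : ℝ) * t0) ≤ ρ := le_trans (H0_specRad hs01 ht01 hst0) hH0
  have hst2 : ((s0 : ℝ) * t0) ≤ ρ * ρ := by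
    have h1 : (0:ℝ) ≤ (s0:ℝ) * t0 := by positivity
    calc ((s0:ℝ) * t0) = Real.sqrt ((s0:ℝ)*t0) * Real.sqrt ((s0:ℝ)*t0) :=
          (Real.mul_self_sqrt h1).symm
    _ ≤ ρ * ρ := mul_le_mul hsq hsq (Real.sqrt_nonneg _) ((Real.sqrt_nonneg _).trans hsq)
  -- assemble the natural number inequality
  have hmain : s0 * t0 + ν * (b + 1) ≤ a + 5 * ν * r + a * b := by
    have h1 : ((s0 : ℝ) * t0) ≤ (a : ℝ) + cAA + cAB := le_trans hst2 hρ2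
    have h2 : (s0 * t0 : ℕ) ≤ a + cAA + cAB := by exact_mod_cast h1
    calc s0 * t0 + ν * (b + 1) ≤ a + cAA + cAB + ν * (b+1) := by omega
    _ ≤ a + 4 * ν * r + (a * b + ν * r) := by omega
    _ = a + 5 * ν * r + a * b := by ring
  exact final_arith r n ν a b s0 t0 hr hn hν2 h2νa hcount ht0 hs0 hmain
end
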